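/- Let d ≥ 3, u > 0, let A be a finite subset of Z^d, and let L^u(x) be the field of local times of the random interlacements at intensity u. Then for every s < 1, E[ exp( s·⟨L^u, e_A⟩ ) ] = exp( u·s·cap(A) / (1−s) ), where ⟨L^u, e_A⟩ = Σ_{x∈Z^d} L^u(x)·e_A(x). -/

import Mathlib

/- Self-contained framework for random interlacements on `ℤ^d`:
   discrete potential theory for simple random walk, Brownian (Newtonian)
   capacity in `ℝ^d`, and an axiomatically characterized model of
   continuous-time random interlacements (via the Laplace functional of
   its local-time field and the avoidance identity, which determine its law). -/

open Filter Metric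
open scoped ENNReal NNReal
open Classical

noncomputable section

namespace RI

/-- The lattice `ℤ^d`. -/
abbrev Lat (d : ℕ) := Fin d → ℤ

/-- `ℝ^d`, equipped (as a Pi type) with the `l^∞`-norm. -/
abbrev Rd (d : ℕ) := Fin d → ℝ

/-- Closed `l^∞`-ball `B(x,r)` in `ℤ^d`. -/
def dBall (d : ℕ) (x : Lat d) (r : ℕ) : Set (Lat d) := {y | ∀ i, |y i - x i| ≤ (r : ℤ)}

/-- The `2d` lattice neighbours of `x`. -/
def nbrs {d : ℕ} (x : Lat d) : Finset (Lat d) :=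
  Finset.image (fun p : Fin d × Bool =>
    Function.update x p.1 (x p.1 + if p.2 then 1 else -1)) Finset.univ

/-- `P_z[H_A ≤ n]`: probability that simple random walk started at `z` enters `A`
within `n` steps. -/
def hitLE (d : ℕ) (A : Set (Lat d)) : ℕ → Lat d → ℝ
  | 0 => fun z => if z ∈ A then 1 else 0
  | (n+1) => fun z => if z ∈ A then 1 else (2*(d:ℝ))⁻¹ * ∑ w ∈ nbrs z, hitLE d A n w

/-- `P_z[H_A < ∞]`: probability that simple random walk started at `z` ever hits `A`. -/
def hitProb (d : ℕ) (A : Set (Lat d)) (z : Lat d) : ℝ := ⨆ n, hitLE d A n z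

/-- The equilibrium measure `e_A` of `A ⊆ ℤ^d`:
`e_A(x) = P_x[no return to A]` for `x ∈ A`, and `0` outside `A`. -/
def eqm (d : ℕ) (A : Set (Lat d)) (x : Lat d) : ℝ :=
  if x ∈ A then 1 - (2*(d:ℝ))⁻¹ * ∑ w ∈ nbrs x, hitProb d A w else 0

/-- The discrete capacity `cap(A) = Σ_x e_A(x)`. -/
def dcap (d : ℕ) (A : Set (Lat d)) : ℝ := ∑' x, eqm d A x

/-- The normalized equilibrium measure `ē_A = e_A / cap(A)`. -/
def neqm (d : ℕ) (A : Set (Lat d)) (x : Lat d) : ℝ := eqm d A x / dcap d A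

/-- `n`-step transition kernel of simple random walk on `ℤ^d`. -/
def pstep (d : ℕ) : ℕ → Lat d → Lat d → ℝ
  | 0 => fun x y => if x = y then 1 else 0
  | (n+1) => fun x y => (2*(d:ℝ))⁻¹ * ∑ z ∈ nbrs x, pstep d n z y

/-- The Green function of simple random walk on `ℤ^d`. -/
def green (d : ℕ) (x y : Lat d) : ℝ := ∑' n, pstep d n x y

/-- Euclidean distance on `ℝ^d`. -/
def eDist {d : ℕ} (x y : Rd d) : ℝ := Real.sqrt (∑ i, (x i - y i)^2)

/-- The Green kernel of Brownian motion on `ℝ^d` (`d ≥ 3`):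
`g(x,y) = Γ(d/2-1) / (2 π^{d/2}) · |x-y|^{2-d}` (Euclidean norm), valued in `ℝ≥0∞`. -/
def gker (d : ℕ) (x y : Rd d) : ℝ≥0∞ :=
  ENNReal.ofReal (Real.Gamma ((d:ℝ)/2 - 1) / (2 * Real.pi ^ ((d:ℝ)/2))) /
    ENNReal.ofReal (eDist x y ^ ((d:ℝ) - 2))

/-- The Green energy of a measure on `ℝ^d`. -/
def energy (d : ℕ) (μ : MeasureTheory.Measure (Rd d)) : ℝ≥0∞ :=
  MeasureTheory.lintegral μ (fun x => MeasureTheory.lintegral μ (fun y => gker d x y))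

/-- Capacity of a (compact) set: inverse of the minimal Green energy of probability
measures carried by `K`. -/
def capAux (d : ℕ) (K : Set (Rd d)) : ℝ≥0∞ :=
  (⨅ (μ : MeasureTheory.Measure (Rd d)) (_ : MeasureTheory.IsProbabilityMeasure μ)
    (_ : μ Kᶜ = 0), energy d μ)⁻¹

/-- The Brownian (Newtonian) capacity of `A ⊆ ℝ^d`, via inner regularity. -/
def bcap (d : ℕ) (A : Set (Rd d)) : ℝ :=
  (⨆ (K : Set (Rd d)) (_ : IsCompact K) (_ : K ⊆ A), capAux d K).toReal

/-- A set in `ℝ^d` is nice if it is a finite union of (closed `l^∞`-)boxes. -/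
def IsNice (d : ℕ) (A : Set (Rd d)) : Prop :=
  ∃ S : Finset (Rd d × ℝ), A = ⋃ p ∈ S, closedBall p.1 p.2

/-- The constrained-capacity function
`f(λ) = inf { capB(B̃(0,1) \ A) : A nice, capB(A) ≤ λ }`. -/
def capf (d : ℕ) (lam : ℝ) : ℝ :=
  sInf {r | ∃ A : Set (Rd d), IsNice d A ∧ bcap d A ≤ lam ∧
    r = bcap d (closedBall 0 1 \ A)}

/-- The `ℝ^d`-filling of `A ⊆ ℤ^d`: union of the closed `l^∞`-balls of radius `1/2`
centered at the vertices of `A`. -/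
def filling {d : ℕ} (A : Set (Lat d)) : Set (Rd d) :=
  ⋃ a ∈ A, closedBall (fun i => (a i : ℝ)) (1/2)

/-- The discrete blow-up `A_N = {x ∈ ℤ^d : inf_{y ∈ N·A} |x-y|_∞ < 1}` of `A ⊆ ℝ^d`. -/
def blowup {d : ℕ} (A : Set (Rd d)) (N : ℕ) : Set (Lat d) :=
  {x | ∃ y ∈ A, dist (fun i => ((x i : ℝ)) : Rd d) ((N:ℝ) • y) < 1}

/-- `B` is an `L`-box (relative to the macroscopic box `B(0,N)` and the
separation parameter `K`): an `l^∞`-ball of radius `L` centered at a point of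
`(2K+1)L·ℤ^d` and contained in `B(0,N)`. -/
def IsLBox (d N L K : ℕ) (B : Set (Lat d)) : Prop :=
  ∃ x : Lat d, (∀ i, (((2*K+1)*L : ℕ) : ℤ) ∣ x i) ∧ B = dBall d x L ∧ B ⊆ dBall d 0 N

/-- `C` is a union of a collection of `L`-boxes. -/
def IsBoxUnion (d N L K : ℕ) (C : Set (Lat d)) : Prop :=
  ∃ 𝓑 : Set (Set (Lat d)), (∀ B ∈ 𝓑, IsLBox d N L K B) ∧ C = ⋃₀ 𝓑

/-- The mesoscopic scale `L = ⌊N^{2/d} (log N)^{1/d}⌋`. -/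
def Lof (d N : ℕ) : ℕ := ⌊(N:ℝ) ^ (2/(d:ℝ)) * Real.log (N:ℝ) ^ (1/(d:ℝ))⌋₊

/-- A model of continuous-time random interlacements on `ℤ^d` at level `u`:
a probability space carrying the local-time field `L = (L^u(x))_{x ∈ ℤ^d}`,
whose law is characterized by the Laplace-functional identity
`E[exp(-⟨V, L⟩)] = exp(-u⟨V, w_V⟩)` with `w_V = (I + G V)⁻¹ 1`, for
nonnegative finitely supported `V` (the defining formula of the local times of
random interlacements), together with the avoidance identity
`P[I^u ∩ A = ∅] = exp(-u·cap(A))` for the interlacement set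
`I^u = {x : L^u(x) > 0}`. -/
structure RIModel (d : ℕ) (u : ℝ) where
  Ω : Type
  [mΩ : MeasurableSpace Ω]
  P : MeasureTheory.Measure Ω
  prob : MeasureTheory.IsProbabilityMeasure P
  L : Ω → Lat d → ℝ
  L_meas : Measurable L
  L_nonneg : ∀ ω x, 0 ≤ L ω x
  laplace : ∀ (S : Finset (Lat d)) (V : Lat d → ℝ), (∀ x, 0 ≤ V x) →
    (∀ x ∉ S, V x = 0) →
    ∀ w : Lat d → ℝ, (∀ x ∈ S, w x + ∑ y ∈ S, green d x y * V y * w y = 1) →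
      MeasureTheory.integral P (fun ω => Real.exp (-∑ x ∈ S, V x * L ω x))
        = Real.exp (-(u * ∑ x ∈ S, V x * w x))
  avoid : ∀ A : Finset (Lat d),
    P {ω | ∀ x ∈ A, L ω x = 0}
      = ENNReal.ofReal (Real.exp (-(u * dcap d (A : Set (Lat d)))))

/-- The interlacement set `I^u = {x : L^u(x) > 0}`. -/
def RIModel.ISet {d : ℕ} {u : ℝ} (M : RIModel d u) (ω : M.Ω) : Set (Lat d) :=
  {x | 0 < M.L ω x}

/-- A pair of independent random interlacements at levels `u₁` and `u₂`
on a common probability space; each factor is a random interlacement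
(characterized as in `RIModel`) and the two local-time fields are independent. -/
structure RIPair (d : ℕ) (u₁ u₂ : ℝ) where
  Ω : Type
  [mΩ : MeasurableSpace Ω]
  P : MeasureTheory.Measure Ω
  prob : MeasureTheory.IsProbabilityMeasure P
  L₁ : Ω → Lat d → ℝ
  L₂ : Ω → Lat d → ℝ
  meas₁ : Measurable L₁
  meas₂ : Measurable L₂
  nonneg₁ : ∀ ω x, 0 ≤ L₁ ω x
  nonneg₂ : ∀ ω x, 0 ≤ L₂ ω x
  laplace₁ : ∀ (S : Finset (Lat d)) (V : Lat d → ℝ), (∀ x, 0 ≤ V x) →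
    (∀ x ∉ S, V x = 0) →
    ∀ w : Lat d → ℝ, (∀ x ∈ S, w x + ∑ y ∈ S, green d x y * V y * w y = 1) →
      MeasureTheory.integral P (fun ω => Real.exp (-∑ x ∈ S, V x * L₁ ω x))
        = Real.exp (-(u₁ * ∑ x ∈ S, V x * w x))
  laplace₂ : ∀ (S : Finset (Lat d)) (V : Lat d → ℝ), (∀ x, 0 ≤ V x) →
    (∀ x ∉ S, V x = 0) →
    ∀ w : Lat d → ℝ, (∀ x ∈ S, w x + ∑ y ∈ S, green d x y * V y * w y = 1) →
      MeasureTheory.integral P (fun ω => Real.exp (-∑ x ∈ S, V x * L₂ ω x))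
        = Real.exp (-(u₂ * ∑ x ∈ S, V x * w x))
  avoid₁ : ∀ A : Finset (Lat d),
    P {ω | ∀ x ∈ A, L₁ ω x = 0}
      = ENNReal.ofReal (Real.exp (-(u₁ * dcap d (A : Set (Lat d)))))
  avoid₂ : ∀ A : Finset (Lat d),
    P {ω | ∀ x ∈ A, L₂ ω x = 0}
      = ENNReal.ofReal (Real.exp (-(u₂ * dcap d (A : Set (Lat d)))))
  indep : ProbabilityTheory.IndepFun L₁ L₂ P

/-- The first interlacement set. -/
def RIPair.ISet₁ {d : ℕ} {u₁ u₂ : ℝ} (M : RIPair d u₁ u₂) (ω : M.Ω) : Set (Lat d) :=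
  {x | 0 < M.L₁ ω x}

/-- The second interlacement set. -/
def RIPair.ISet₂ {d : ℕ} {u₁ u₂ : ℝ} (M : RIPair d u₁ u₂) (ω : M.Ω) : Set (Lat d) :=
  {x | 0 < M.L₂ ω x}

/-- The inner boundary `∂_i A` of `A ⊆ ℤ^d`. -/
def innerBdry {d : ℕ} (A : Set (Lat d)) : Set (Lat d) :=
  {z ∈ A | ∃ w ∈ nbrs z, w ∉ A}

/-- An `L`-box `B` is Type-I good if `max_{z ∈ ∂_i B} P_z[H_{I^u ∩ B} = ∞] < δ`. -/
def TypeIGood {d : ℕ} {u : ℝ} (δ : ℝ) (M : RIModel d u) (ω : M.Ω) (B : Set (Lat d)) : Prop :=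
  ∀ z ∈ innerBdry B, 1 - hitProb d (M.ISet ω ∩ B) z < δ

/-- An `L`-box `B` is Type-II good if `⟨L^u, ē_B⟩ < δ·u`. -/
def TypeIIGood {d : ℕ} {u : ℝ} (δ : ℝ) (M : RIModel d u) (ω : M.Ω) (B : Set (Lat d)) : Prop :=
  (∑' y, M.L ω y * neqm d B y) < δ * u

/-- A box is bad if it is neither Type-I good nor Type-II good. -/
def IsBad {d : ℕ} {u : ℝ} (δ : ℝ) (M : RIModel d u) (ω : M.Ω) (B : Set (Lat d)) : Prop :=
  ¬ TypeIGood δ M ω B ∧ ¬ TypeIIGood δ M ω B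

/-- The number of bad `L`-boxes in `B(0,N)`. -/
def badCount {d : ℕ} {u : ℝ} (δ : ℝ) (M : RIModel d u) (ω : M.Ω) (N L K : ℕ) : ℕ :=
  Set.ncard {B : Set (Lat d) | IsLBox d N L K B ∧ IsBad δ M ω B}

/-- The union `C₂` of all Type-II good `L`-boxes. -/
def C2set {d : ℕ} {u : ℝ} (δ : ℝ) (M : RIModel d u) (ω : M.Ω) (N L K : ℕ) : Set (Lat d) :=
  ⋃₀ {B : Set (Lat d) | IsLBox d N L K B ∧ TypeIIGood δ M ω B}

end RI

open RI

namespace RIPf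
open RI MeasureTheory Filter

variable {d : ℕ}

lemma card_nbrs_le (x : Lat d) : (nbrs x).card ≤ 2 * d := by
  classical
  calc (nbrs x).card ≤ (Finset.univ : Finset (Fin d × Bool)).card := Finset.card_image_le
  _ = d * 2 := by simp
  _ = 2 * d := by ring

lemma invtwod_nonneg : (0:ℝ) ≤ (2*(d:ℝ))⁻¹ := by positivity

lemma invtwod_pos (hd : 0 < d) : (0:ℝ) < (2*(d:ℝ))⁻¹ := by
  have : (0:ℝ) < (d:ℝ) := by exact_mod_cast hd
  positivity

lemma hitLE_nonneg (A : Set (Lat d)) : ∀ n z, 0 ≤ hitLE d A n z := by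
  intro n
  induction n with
  | zero =>
    intro z; simp only [hitLE]
    split <;> norm_num
  | succ n ih =>
    intro z; simp only [hitLE]
    split
    · norm_num
    · exact mul_nonneg invtwod_nonneg (Finset.sum_nonneg fun w _ => ih w)

lemma hitLE_le_one (hd : 0 < d) (A : Set (Lat d)) : ∀ n z, hitLE d A n z ≤ 1 := by
  intro n
  induction n with
  | zero =>
    intro z; simp only [hitLE]
    split <;> norm_num
  | succ n ih =>
    intro z; simp only [hitLE]
    split
    · exact le_refl 1
    · calc (2*(d:ℝ))⁻¹ * ∑ w ∈ nbrs z, hitLE d A n w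
          ≤ (2*(d:ℝ))⁻¹ * ((nbrs z).card * 1) := by
            refine mul_le_mul_of_nonneg_left ?_ invtwod_nonneg
            simpa using Finset.sum_le_card_nsmul (nbrs z) _ 1 (fun w _ => ih w)
        _ ≤ (2*(d:ℝ))⁻¹ * (2*(d:ℝ)) := by
            refine mul_le_mul_of_nonneg_left ?_ invtwod_nonneg
            rw [mul_one]
            exact_mod_cast Nat.cast_le.mpr (card_nbrs_le z)
        _ = 1 := by
            have : (0:ℝ) < (d:ℝ) := by exact_mod_cast hd
            field_simp

lemma hitLE_mono (A : Set (Lat d)) : ∀ n z, hitLE d A n z ≤ hitLE d A (n+1) z := by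
  intro n
  induction n with
  | zero =>
    intro z
    simp only [hitLE]
    split
    · exact le_refl 1
    · refine mul_nonneg invtwod_nonneg (Finset.sum_nonneg fun w _ => ?_)
      split <;> norm_num
  | succ n ih =>
    intro z
    simp only [hitLE]
    split
    · exact le_refl 1
    · exact mul_le_mul_of_nonneg_left (Finset.sum_le_sum fun w _ => ih w) invtwod_nonneg

lemma hitLE_monotone (A : Set (Lat d)) (z : Lat d) : Monotone (fun n => hitLE d A n z) :=
  monotone_nat_of_le_succ (fun n => hitLE_mono A n z)

lemma hitLE_bddAbove (hd : 0 < d) (A : Set (Lat d)) (z : Lat d) :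
    BddAbove (Set.range (fun n => hitLE d A n z)) := by
  refine ⟨1, ?_⟩
  rintro y ⟨n, rfl⟩
  exact hitLE_le_one hd A n z

lemma hitLE_le_hitProb (hd : 0 < d) (A : Set (Lat d)) (n : ℕ) (z : Lat d) :
    hitLE d A n z ≤ hitProb d A z :=
  le_ciSup (hitLE_bddAbove hd A z) n

lemma hitProb_nonneg (hd : 0 < d) (A : Set (Lat d)) (z : Lat d) : 0 ≤ hitProb d A z :=
  le_trans (hitLE_nonneg A 0 z) (hitLE_le_hitProb hd A 0 z)

lemma hitProb_le_one (hd : 0 < d) (A : Set (Lat d)) (z : Lat d) : hitProb d A z ≤ 1 :=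
  ciSup_le (fun n => hitLE_le_one hd A n z)

lemma tendsto_hitLE (hd : 0 < d) (A : Set (Lat d)) (z : Lat d) :
    Tendsto (fun n => hitLE d A n z) atTop (nhds (hitProb d A z)) :=
  tendsto_atTop_ciSup (hitLE_monotone A z) (hitLE_bddAbove hd A z)

lemma eqm_nonneg (hd : 0 < d) (A : Set (Lat d)) (x : Lat d) : 0 ≤ eqm d A x := by
  unfold eqm
  split
  · rw [sub_nonneg]
    calc (2*(d:ℝ))⁻¹ * ∑ w ∈ nbrs x, hitProb d A w
        ≤ (2*(d:ℝ))⁻¹ * ((nbrs x).card * 1) := by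
          refine mul_le_mul_of_nonneg_left ?_ invtwod_nonneg
          simpa using Finset.sum_le_card_nsmul (nbrs x) _ 1 (fun w _ => hitProb_le_one hd A w)
      _ ≤ (2*(d:ℝ))⁻¹ * (2*(d:ℝ)) := by
          refine mul_le_mul_of_nonneg_left ?_ invtwod_nonneg
          rw [mul_one]
          exact_mod_cast Nat.cast_le.mpr (card_nbrs_le x)
      _ = 1 := by
          have : (0:ℝ) < (d:ℝ) := by exact_mod_cast hd
          field_simp
  · exact le_refl 0

lemma eqm_le_one (hd : 0 < d) (A : Set (Lat d)) (x : Lat d) : eqm d A x ≤ 1 := by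
  unfold eqm
  split
  · have : 0 ≤ (2*(d:ℝ))⁻¹ * ∑ w ∈ nbrs x, hitProb d A w :=
      mul_nonneg invtwod_nonneg (Finset.sum_nonneg fun w _ => hitProb_nonneg hd A w)
    linarith
  · norm_num

lemma eqm_eq_zero {A : Set (Lat d)} {x : Lat d} (hx : x ∉ A) : eqm d A x = 0 := by
  unfold eqm
  rw [if_neg hx]

lemma pstep_nonneg : ∀ (n : ℕ) (x y : Lat d), 0 ≤ pstep d n x y := by
  intro n
  induction n with
  | zero =>
    intro x y; simp only [pstep]; split <;> norm_num
  | succ n ih =>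
    intro x y; simp only [pstep]
    exact mul_nonneg invtwod_nonneg (Finset.sum_nonneg fun z _ => ih z y)

end RIPf



namespace RIPf
open RI MeasureTheory Filter

variable {d : ℕ}

/-- `Efun A m y = P_y[no visit to A during [1,m]]`. -/
def Efun (d : ℕ) (A : Set (Lat d)) : ℕ → Lat d → ℝ
  | 0 => fun _ => 1
  | (m+1) => fun y => 1 - (2*(d:ℝ))⁻¹ * ∑ w ∈ nbrs y, hitLE d A m w

lemma Efun_succ_le (A : Set (Lat d)) : ∀ m y, Efun d A (m+1) y ≤ Efun d A m y := by
  intro m y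
  cases m with
  | zero =>
    show 1 - _ ≤ 1
    have : 0 ≤ (2*(d:ℝ))⁻¹ * ∑ w ∈ nbrs y, hitLE d A 0 w :=
      mul_nonneg invtwod_nonneg (Finset.sum_nonneg fun w _ => hitLE_nonneg A 0 w)
    linarith
  | succ m =>
    show 1 - _ ≤ 1 - _
    have h : ∑ w ∈ nbrs y, hitLE d A m w ≤ ∑ w ∈ nbrs y, hitLE d A (m+1) w :=
      Finset.sum_le_sum fun w _ => hitLE_mono A m w
    have := mul_le_mul_of_nonneg_left h (invtwod_nonneg (d := d))
    linarith

lemma Efun_le_one (A : Set (Lat d)) (m : ℕ) (y : Lat d) : Efun d A m y ≤ 1 := by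
  cases m with
  | zero => exact le_refl 1
  | succ m =>
    show 1 - _ ≤ 1
    have : 0 ≤ (2*(d:ℝ))⁻¹ * ∑ w ∈ nbrs y, hitLE d A m w :=
      mul_nonneg invtwod_nonneg (Finset.sum_nonneg fun w _ => hitLE_nonneg A m w)
    linarith

lemma Efun_anti (A : Set (Lat d)) (y : Lat d) : Antitone (fun m => Efun d A m y) :=
  antitone_nat_of_succ_le (fun m => Efun_succ_le A m y)

lemma eqm_le_Efun (hd : 0 < d) (A : Set (Lat d)) (m : ℕ) {y : Lat d} (hy : y ∈ A) :
    eqm d A y ≤ Efun d A m y := by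
  cases m with
  | zero => exact (eqm_le_one hd A y).trans (le_refl 1)
  | succ m =>
    unfold eqm
    rw [if_pos hy]
    show 1 - _ ≤ 1 - _
    have h : ∑ w ∈ nbrs y, hitLE d A m w ≤ ∑ w ∈ nbrs y, hitProb d A w :=
      Finset.sum_le_sum fun w _ => hitLE_le_hitProb hd A m w
    have := mul_le_mul_of_nonneg_left h (invtwod_nonneg (d := d))
    linarith

lemma tendsto_Efun (hd : 0 < d) (A : Set (Lat d)) {y : Lat d} (hy : y ∈ A) :
    Tendsto (fun m => Efun d A m y) atTop (nhds (eqm d A y)) := by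
  have h1 : Tendsto (fun m => Efun d A (m+1) y) atTop (nhds (eqm d A y)) := by
    have hsum : Tendsto (fun m => ∑ w ∈ nbrs y, hitLE d A m w) atTop
        (nhds (∑ w ∈ nbrs y, hitProb d A w)) :=
      tendsto_finset_sum _ (fun w _ => tendsto_hitLE hd A w)
    have : Tendsto (fun m => 1 - (2*(d:ℝ))⁻¹ * ∑ w ∈ nbrs y, hitLE d A m w) atTop
        (nhds (1 - (2*(d:ℝ))⁻¹ * ∑ w ∈ nbrs y, hitProb d A w)) :=
      (tendsto_const_nhds.sub (tendsto_const_nhds.mul hsum))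
    have he : eqm d A y = 1 - (2*(d:ℝ))⁻¹ * ∑ w ∈ nbrs y, hitProb d A w := by
      unfold eqm; rw [if_pos hy]
    rw [he]
    exact this
  exact (tendsto_add_atTop_iff_nat 1).mp h1

/-- The key combinatorial identity (last-exit decomposition, finite horizon). -/
lemma key_ident (A : Finset (Lat d)) : ∀ (n : ℕ) (x : Lat d),
    ∑ k ∈ Finset.range (n+1), ∑ y ∈ A, pstep d k x y * Efun d (↑A) (n - k) y
      = hitLE d (↑A) n x := by
  intro n
  induction n with
  | zero =>
    intro x
    rw [show (0:ℕ)+1 = 1 from rfl, Finset.range_one, Finset.sum_singleton]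
    have : ∀ y ∈ A, pstep d 0 x y * Efun d (↑A) 0 y = if x = y then 1 else 0 := by
      intro y _
      show (if x = y then (1:ℝ) else 0) * 1 = _
      rw [mul_one]
    rw [Finset.sum_congr rfl this, Finset.sum_ite_eq A x (fun _ => (1:ℝ))]
    show (if x ∈ A then (1:ℝ) else 0) = hitLE d (↑A) 0 x
    simp only [hitLE]
    by_cases hx : x ∈ A
    · rw [if_pos hx, if_pos (Finset.mem_coe.mpr hx)]
    · rw [if_neg hx, if_neg (fun h => hx (Finset.mem_coe.mp h))]
  | succ n ih =>
    intro x
    have hsplit : ∑ k ∈ Finset.range (n+2), ∑ y ∈ A, pstep d k x y * Efun d (↑A) (n+1-k) y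
        = (∑ k ∈ Finset.range (n+1), ∑ y ∈ A, pstep d (k+1) x y * Efun d (↑A) (n-k) y)
          + ∑ y ∈ A, pstep d 0 x y * Efun d (↑A) (n+1) y := by
      rw [Finset.sum_range_succ' (fun k => ∑ y ∈ A, pstep d k x y * Efun d (↑A) (n+1-k) y) (n+1)]
      simp only [Nat.succ_sub_succ, Nat.sub_zero]
    have hfirst : ∑ y ∈ A, pstep d 0 x y * Efun d (↑A) (n+1) y
        = if x ∈ A then Efun d (↑A) (n+1) x else 0 := by
      have : ∀ y ∈ A, pstep d 0 x y * Efun d (↑A) (n+1) y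
          = if x = y then Efun d (↑A) (n+1) y else 0 := by
        intro y _
        show (if x = y then (1:ℝ) else 0) * _ = _
        split <;> simp
      rw [Finset.sum_congr rfl this, Finset.sum_ite_eq A x (fun y => Efun d (↑A) (n+1) y)]
    have hrest : ∑ k ∈ Finset.range (n+1), ∑ y ∈ A, pstep d (k+1) x y * Efun d (↑A) (n-k) y
        = (2*(d:ℝ))⁻¹ * ∑ z ∈ nbrs x, hitLE d (↑A) n z := by
      have hterm : ∀ k ∈ Finset.range (n+1), ∑ y ∈ A, pstep d (k+1) x y * Efun d (↑A) (n-k) y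
          = (2*(d:ℝ))⁻¹ * ∑ z ∈ nbrs x, ∑ y ∈ A, pstep d k z y * Efun d (↑A) (n-k) y := by
        intro k _
        have hps : ∀ y ∈ A, pstep d (k+1) x y * Efun d (↑A) (n-k) y
            = ∑ z ∈ nbrs x, (2*(d:ℝ))⁻¹ * (pstep d k z y * Efun d (↑A) (n-k) y) := by
          intro y _
          simp only [pstep, Finset.sum_mul, Finset.mul_sum]
          exact Finset.sum_congr rfl fun z _ => by ring
        rw [Finset.sum_congr rfl hps, Finset.sum_comm]
        conv_rhs => rw [Finset.mul_sum]
        refine Finset.sum_congr rfl fun z _ => ?_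
        exact (Finset.mul_sum _ _ _).symm
      rw [Finset.sum_congr rfl hterm, ← Finset.mul_sum]
      congr 1
      rw [Finset.sum_comm]
      exact Finset.sum_congr rfl fun z _ => ih z
    rw [hsplit, hfirst, hrest]
    by_cases hx : x ∈ A
    · rw [if_pos hx]
      have h1 : hitLE d (↑A) (n+1) x = 1 := by
        simp only [hitLE]
        rw [if_pos (Finset.mem_coe.mpr hx)]
      rw [h1]
      simp only [Efun]
      ring
    · rw [if_neg hx, add_zero]
      have h1 : hitLE d (↑A) (n+1) x = (2*(d:ℝ))⁻¹ * ∑ z ∈ nbrs x, hitLE d (↑A) n z := by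
        simp only [hitLE]
        rw [if_neg (fun h => hx (Finset.mem_coe.mp h))]
      rw [h1]

end RIPf


namespace RIPf
open RI MeasureTheory Filter

variable {d : ℕ}

lemma nbrs_add (x v : Lat d) : nbrs (x + v) = Finset.image (· + v) (nbrs x) := by
  unfold nbrs
  rw [Finset.image_image]
  refine Finset.image_congr ?_
  intro p _
  show Function.update (x + v) p.1 ((x + v) p.1 + _) = Function.update x p.1 (x p.1 + _) + v
  funext j
  by_cases hj : j = p.1
  · subst hj
    simp [Function.update_self]
    ring
  · simp [Function.update_of_ne hj]

lemma add_right_inj_lat (v : Lat d) : Function.Injective (· + v : Lat d → Lat d) := by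
  intro a b h
  have := congrArg (· - v) h
  simpa using this

lemma pstep_translate (v : Lat d) : ∀ (n : ℕ) (x y : Lat d),
    pstep d n (x + v) (y + v) = pstep d n x y := by
  intro n
  induction n with
  | zero =>
    intro x y
    show (if x + v = y + v then (1:ℝ) else 0) = if x = y then 1 else 0
    by_cases h : x = y
    · rw [if_pos h, if_pos (by rw [h])]
    · rw [if_neg h, if_neg (fun hc => h (add_right_inj_lat v hc))]
  | succ n ih =>
    intro x y
    show (2*(d:ℝ))⁻¹ * ∑ z ∈ nbrs (x + v), pstep d n z (y + v) = (2*(d:ℝ))⁻¹ * ∑ z ∈ nbrs x, pstep d n z y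
    rw [nbrs_add, Finset.sum_image (fun a _ b _ h => add_right_inj_lat v h)]
    congr 1
    exact Finset.sum_congr rfl fun z _ => ih z y

lemma pstep_diag_eq (x : Lat d) (n : ℕ) : pstep d n x x = pstep d n 0 0 := by
  have := pstep_translate (d := d) x n 0 0
  simpa using this

lemma pstep_ck : ∀ (m n : ℕ) (x z y : Lat d),
    pstep d m x z * pstep d n z y ≤ pstep d (m + n) x y := by
  intro m
  induction m with
  | zero =>
    intro n x z y
    show (if x = z then (1:ℝ) else 0) * pstep d n z y ≤ pstep d (0 + n) x y
    by_cases h : x = z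
    · rw [if_pos h, one_mul, h, Nat.zero_add]
    · rw [if_neg h, zero_mul]
      exact pstep_nonneg _ _ _
  | succ m ih =>
    intro n x z y
    have hstep : m + 1 + n = (m + n) + 1 := by omega
    rw [hstep]
    show pstep d (m+1) x z * pstep d n z y ≤ (2*(d:ℝ))⁻¹ * ∑ w ∈ nbrs x, pstep d (m+n) w y
    have hl : pstep d (m+1) x z * pstep d n z y
        = (2*(d:ℝ))⁻¹ * ∑ w ∈ nbrs x, pstep d m w z * pstep d n z y := by
      show ((2*(d:ℝ))⁻¹ * ∑ w ∈ nbrs x, pstep d m w z) * pstep d n z y = _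
      rw [mul_assoc, Finset.sum_mul]
    rw [hl]
    refine mul_le_mul_of_nonneg_left ?_ invtwod_nonneg
    exact Finset.sum_le_sum fun w _ => ih n w z y

lemma pstep_pos_exists (hd : 0 < d) (y x : Lat d) : ∃ m, 0 < pstep d m y x := by
  set D := ∑ i, (y i - x i).natAbs with hD
  clear_value D
  induction D using Nat.strong_induction_on generalizing y with
  | _ D ih =>
    by_cases h0 : D = 0
    · have hyx : y = x := by
        funext i
        have hz : (y i - x i).natAbs = 0 := by
          by_contra hne
          have h1 : 0 < ∑ i, (y i - x i).natAbs :=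
            Finset.sum_pos' (fun i _ => Nat.zero_le _)
              ⟨i, Finset.mem_univ i, Nat.pos_of_ne_zero hne⟩
          omega
        exact Int.sub_eq_zero.mp (Int.natAbs_eq_zero.mp hz)
      subst hyx
      exact ⟨0, by simp [pstep]⟩
    · have hex : ∃ i, (y i - x i).natAbs ≠ 0 := by
        by_contra hc
        push_neg at hc
        exact h0 (by rw [hD]; exact Finset.sum_eq_zero fun i _ => hc i)
      obtain ⟨i, hi⟩ := hex
      set e : ℤ := if x i > y i then 1 else -1 with he
      set y' : Lat d := Function.update y i (y i + e) with hy'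
      have hmem : y' ∈ nbrs y := by
        unfold nbrs
        refine Finset.mem_image.mpr ⟨⟨i, decide (x i > y i)⟩, Finset.mem_univ _, ?_⟩
        have hb : (if (decide (x i > y i) : Bool) then (1:ℤ) else -1) = e := by
          by_cases h : x i > y i <;> simp [he, h]
        show Function.update y i (y i + if (decide (x i > y i) : Bool) then 1 else -1) = y'
        rw [hb, hy']
      have hne : y i - x i ≠ 0 := fun h => hi (by rw [h]; rfl)
      have hxy : (y i + e - x i).natAbs = (y i - x i).natAbs - 1 := by
        rw [he]; split <;> omega
      have h1 : ∑ j, (y' j - x j).natAbs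
          = (∑ j ∈ Finset.univ \ {i}, (y j - x j).natAbs) + (y i + e - x i).natAbs := by
        rw [Finset.sum_eq_sum_sdiff_singleton_add (Finset.mem_univ i)
          (fun j => (y' j - x j).natAbs)]
        congr 1
        · refine Finset.sum_congr rfl fun j hj => ?_
          have hji : j ≠ i := by
            intro hc; exact ((Finset.mem_sdiff.mp hj).2) (by rw [hc]; exact Finset.mem_singleton_self i)
          rw [hy', Function.update_of_ne hji]
        · rw [hy', Function.update_self]
      have h2 : D = (∑ j ∈ Finset.univ \ {i}, (y j - x j).natAbs) + (y i - x i).natAbs := by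
        rw [hD, Finset.sum_eq_sum_sdiff_singleton_add (Finset.mem_univ i)
          (fun j => (y j - x j).natAbs)]
      have hpos : 0 < (y i - x i).natAbs := Nat.pos_of_ne_zero hi
      have hD' : D - 1 = ∑ j, (y' j - x j).natAbs := by
        rw [h1, hxy]; omega
      have hlt : D - 1 < D := by omega
      obtain ⟨m, hm⟩ := ih (D - 1) hlt y' hD'
      refine ⟨m + 1, ?_⟩
      show 0 < (2*(d:ℝ))⁻¹ * ∑ w ∈ nbrs y, pstep d m w x
      refine mul_pos (invtwod_pos hd) ?_
      refine Finset.sum_pos' (fun w _ => pstep_nonneg _ _ _) ⟨y', hmem, hm⟩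

lemma summable_pstep (hd : 0 < d) (hT : Summable (fun n => pstep d n 0 0)) (x y : Lat d) :
    Summable (fun n => pstep d n x y) := by
  obtain ⟨m, hm⟩ := pstep_pos_exists hd y x
  have hxx : Summable (fun n => pstep d n x x) := by
    have : (fun n => pstep d n x x) = fun n => pstep d n 0 0 := funext fun n => pstep_diag_eq x n
    rw [this]; exact hT
  have hshift : Summable (fun n => pstep d (n + m) x x) := (summable_nat_add_iff m).mpr hxx
  refine Summable.of_nonneg_of_le (fun n => pstep_nonneg _ _ _) (fun n => ?_)
    (hshift.mul_left (pstep d m y x)⁻¹)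
  have h1 : pstep d n x y * pstep d m y x ≤ pstep d (n + m) x x := pstep_ck n m x y x
  rw [mul_comm] at h1
  calc pstep d n x y = (pstep d m y x)⁻¹ * (pstep d m y x * pstep d n x y) := by
        field_simp
    _ ≤ (pstep d m y x)⁻¹ * pstep d (n + m) x x := by
        exact mul_le_mul_of_nonneg_left h1 (inv_nonneg.mpr (pstep_nonneg _ _ _))

lemma green_nonneg (x y : Lat d) : 0 ≤ green d x y :=
  tsum_nonneg (fun n => pstep_nonneg n x y)

set_option maxHeartbeats 2000000 in
/-- Lemma B: the full-space last-exit identity. -/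
lemma tsum_pstep_eqm (hd : 0 < d) (hT : Summable (fun n => pstep d n 0 0))
    (A : Finset (Lat d)) {x : Lat d} (hx : x ∈ A) :
    ∑' k, (∑ y ∈ A, pstep d k x y * eqm d (↑A) y) = 1 := by
  set g : ℕ → ℝ := fun k => ∑ y ∈ A, pstep d k x y * eqm d (↑A) y with hg
  have hgnn : ∀ k, 0 ≤ g k := fun k =>
    Finset.sum_nonneg fun y _ => mul_nonneg (pstep_nonneg _ _ _) (eqm_nonneg hd _ y)
  have hone : ∀ n, hitLE d (↑A) n x = 1 := by
    intro n
    cases n with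
    | zero =>
      simp only [hitLE]
      rw [if_pos (Finset.mem_coe.mpr hx)]
    | succ n =>
      simp only [hitLE]
      rw [if_pos (Finset.mem_coe.mpr hx)]
  have hbound : ∀ n, ∑ k ∈ Finset.range (n+1), g k ≤ 1 := by
    intro n
    have := key_ident A n x
    rw [hone n] at this
    calc ∑ k ∈ Finset.range (n+1), g k
        ≤ ∑ k ∈ Finset.range (n+1), ∑ y ∈ A, pstep d k x y * Efun d (↑A) (n - k) y := by
          refine Finset.sum_le_sum fun k hk => Finset.sum_le_sum fun y hy => ?_
          exact mul_le_mul_of_nonneg_left (eqm_le_Efun hd _ _ (Finset.mem_coe.mpr hy))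
            (pstep_nonneg _ _ _)
      _ = 1 := this
  have hbound' : ∀ n, ∑ k ∈ Finset.range n, g k ≤ 1 := by
    intro n
    cases n with
    | zero => simp
    | succ n => exact hbound n
  have hsum : Summable g := summable_of_sum_range_le hgnn hbound'
  -- upper bound
  have hle : ∑' k, g k ≤ 1 := Real.tsum_le_of_sum_range_le hgnn hbound'
  -- now the lower bound via the error estimate
  -- partial sums converge to the tsum
  have hps : Tendsto (fun n => ∑ k ∈ Finset.range n, g k) atTop (nhds (∑' k, g k)) :=
    hsum.hasSum.tendsto_sum_nat
  -- the error term R n = 1 - ∑_{k ≤ n} g k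
  have hRform : ∀ n, 1 - ∑ k ∈ Finset.range (n+1), g k
      = ∑ k ∈ Finset.range (n+1), ∑ y ∈ A, pstep d k x y * (Efun d (↑A) (n - k) y - eqm d (↑A) y) := by
    intro n
    have hki := key_ident A n x
    rw [hone n] at hki
    rw [← hki]
    rw [← Finset.sum_sub_distrib]
    refine Finset.sum_congr rfl fun k _ => ?_
    rw [← Finset.sum_sub_distrib]
    refine Finset.sum_congr rfl fun y _ => ?_
    ring
  -- R (2n+1) ≤ P1 n + P2 n where
  set G : Lat d → ℝ := fun y => ∑' k, pstep d k x y with hG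
  have hGsum : ∀ y : Lat d, Summable (fun k => pstep d k x y) := fun y => summable_pstep hd hT x y
  have hpartG : ∀ (y : Lat d) (n : ℕ), ∑ k ∈ Finset.range n, pstep d k x y ≤ G y := by
    intro y n
    exact Summable.sum_le_tsum (Finset.range n) (fun k _ => pstep_nonneg _ _ _) (hGsum y)
  have key2 : ∀ n : ℕ, 1 - ∑ k ∈ Finset.range ((2*n+1)+1), g k
      ≤ (∑ y ∈ A, (Efun d (↑A) n y - eqm d (↑A) y) * G y)
        + ∑ y ∈ A, (G y - ∑ k ∈ Finset.range (n+1), pstep d k x y) := by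
    intro n
    rw [hRform (2*n+1)]
    have hdecomp : ∑ k ∈ Finset.range ((2*n+1)+1),
          (∑ y ∈ A, pstep d k x y * (Efun d (↑A) ((2*n+1) - k) y - eqm d (↑A) y))
        = (∑ k ∈ Finset.Ico 0 (n+1), ∑ y ∈ A,
            pstep d k x y * (Efun d (↑A) ((2*n+1) - k) y - eqm d (↑A) y))
          + ∑ k ∈ Finset.Ico (n+1) (2*n+2), ∑ y ∈ A,
            pstep d k x y * (Efun d (↑A) ((2*n+1) - k) y - eqm d (↑A) y) := by
      rw [Finset.range_eq_Ico]
      have h1 : (2*n+1)+1 = 2*n+2 := by omega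
      rw [h1]
      rw [← Finset.sum_Ico_consecutive _ (Nat.zero_le (n+1)) (by omega : n+1 ≤ 2*n+2)]
    rw [hdecomp]
    refine add_le_add ?_ ?_
    · have hterm : ∀ k ∈ Finset.Ico 0 (n+1),
          ∑ y ∈ A, pstep d k x y * (Efun d (↑A) ((2*n+1) - k) y - eqm d (↑A) y)
          ≤ ∑ y ∈ A, pstep d k x y * (Efun d (↑A) n y - eqm d (↑A) y) := by
        intro k hk
        refine Finset.sum_le_sum fun y hy => ?_
        refine mul_le_mul_of_nonneg_left ?_ (pstep_nonneg _ _ _)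
        have hE : Efun d (↑A) ((2*n+1) - k) y ≤ Efun d (↑A) n y := by
          refine Efun_anti (↑A) y ?_
          have : k < n+1 := (Finset.mem_Ico.mp hk).2
          omega
        linarith
      refine le_trans (Finset.sum_le_sum hterm) ?_
      rw [Finset.sum_comm]
      refine Finset.sum_le_sum fun y hy => ?_
      have hc : 0 ≤ Efun d (↑A) n y - eqm d (↑A) y := by
        have := eqm_le_Efun hd (↑A) n (Finset.mem_coe.mpr hy); linarith
      have hGb : ∑ k ∈ Finset.Ico 0 (n+1), pstep d k x y ≤ G y := by
        rw [← Finset.range_eq_Ico]; exact hpartG y (n+1)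
      calc ∑ k ∈ Finset.Ico 0 (n+1), pstep d k x y * (Efun d (↑A) n y - eqm d (↑A) y)
          = (∑ k ∈ Finset.Ico 0 (n+1), pstep d k x y) * (Efun d (↑A) n y - eqm d (↑A) y) := by
            rw [Finset.sum_mul]
        _ ≤ G y * (Efun d (↑A) n y - eqm d (↑A) y) := mul_le_mul_of_nonneg_right hGb hc
        _ = (Efun d (↑A) n y - eqm d (↑A) y) * G y := by ring
    · have hterm : ∀ k ∈ Finset.Ico (n+1) (2*n+2),
          ∑ y ∈ A, pstep d k x y * (Efun d (↑A) ((2*n+1) - k) y - eqm d (↑A) y)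
          ≤ ∑ y ∈ A, pstep d k x y := by
        intro k hk
        refine Finset.sum_le_sum fun y hy => ?_
        have h1 : Efun d (↑A) ((2*n+1) - k) y - eqm d (↑A) y ≤ 1 := by
          have := Efun_le_one (d := d) (↑A) ((2*n+1)-k) y
          have := eqm_nonneg hd (↑A) y
          linarith
        have h0 : 0 ≤ pstep d k x y := pstep_nonneg _ _ _
        calc pstep d k x y * (Efun d (↑A) ((2*n+1) - k) y - eqm d (↑A) y)
            ≤ pstep d k x y * 1 := mul_le_mul_of_nonneg_left h1 h0
          _ = pstep d k x y := mul_one _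
      refine le_trans (Finset.sum_le_sum hterm) ?_
      rw [Finset.sum_comm]
      refine Finset.sum_le_sum fun y hy => ?_
      have hcons : ∑ k ∈ Finset.Ico 0 (n+1), pstep d k x y
            + ∑ k ∈ Finset.Ico (n+1) (2*n+2), pstep d k x y
          = ∑ k ∈ Finset.Ico 0 (2*n+2), pstep d k x y :=
        Finset.sum_Ico_consecutive _ (Nat.zero_le _) (by omega)
      have h2 : ∑ k ∈ Finset.Ico 0 (2*n+2), pstep d k x y ≤ G y := by
        rw [← Finset.range_eq_Ico]; exact hpartG y (2*n+2)
      have h3 : ∑ k ∈ Finset.range (n+1), pstep d k x y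
          = ∑ k ∈ Finset.Ico 0 (n+1), pstep d k x y := by rw [Finset.range_eq_Ico]
      rw [h3]
      linarith
  have hP1 : Tendsto (fun n => ∑ y ∈ A, (Efun d (↑A) n y - eqm d (↑A) y) * G y)
      atTop (nhds 0) := by
    have h := tendsto_finset_sum (f := fun y n => (Efun d (↑A) n y - eqm d (↑A) y) * G y) A
      (fun y hy => (((tendsto_Efun hd (↑A) (Finset.mem_coe.mpr hy)).sub
        tendsto_const_nhds).mul tendsto_const_nhds))
    simpa using h
  have hP2 : Tendsto (fun n => ∑ y ∈ A, (G y - ∑ k ∈ Finset.range (n+1), pstep d k x y))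
      atTop (nhds 0) := by
    have h := tendsto_finset_sum
      (f := fun y n => G y - ∑ k ∈ Finset.range (n+1), pstep d k x y) A
      (fun y _ => by
        have hy' : Tendsto (fun n => ∑ k ∈ Finset.range (n+1), pstep d k x y)
            atTop (nhds (G y)) :=
          (tendsto_add_atTop_iff_nat 1).mpr (hGsum y).hasSum.tendsto_sum_nat
        exact tendsto_const_nhds.sub hy')
    simpa using h
  have hzero : Tendsto (fun n => 1 - ∑ k ∈ Finset.range ((2*n+1)+1), g k) atTop (nhds 0) := by
    refine squeeze_zero (fun n => ?_) (fun n => key2 n) (by simpa using hP1.add hP2)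
    have := hbound (2*n+1); linarith
  have hlim1 : Tendsto (fun n => ∑ k ∈ Finset.range ((2*n+1)+1), g k) atTop (nhds 1) := by
    have h := (tendsto_const_nhds (x := (1:ℝ)) (f := atTop (α := ℕ))).sub hzero
    simpa using h
  have hlim2 : Tendsto (fun n => ∑ k ∈ Finset.range ((2*n+1)+1), g k) atTop
      (nhds (∑' k, g k)) := by
    have hmono : Tendsto (fun n : ℕ => (2*n+1)+1) atTop atTop :=
      tendsto_atTop_atTop_of_monotone (fun a b h => by omega) (fun b => ⟨b, by omega⟩)
    exact hps.comp hmono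
  exact tendsto_nhds_unique hlim2 hlim1

end RIPf


namespace RIPf
open RI MeasureTheory Filter

variable {d : ℕ}

/-- Lemma C: `G e_A = 1` on `A`. -/
lemma green_eqm_ident (hd : 0 < d) (hT : Summable (fun n => pstep d n 0 0))
    (A : Finset (Lat d)) {x : Lat d} (hx : x ∈ A) :
    ∑ y ∈ A, green d x y * eqm d (↑A) y = 1 := by
  have hswap : ∑' k, (∑ y ∈ A, pstep d k x y * eqm d (↑A) y)
      = ∑ y ∈ A, ∑' k, pstep d k x y * eqm d (↑A) y :=
    Summable.tsum_finsetSum (fun y _ => (summable_pstep hd hT x y).mul_right _)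
  have h2 : ∀ y ∈ A, (∑' k, pstep d k x y * eqm d (↑A) y) = green d x y * eqm d (↑A) y :=
    fun y _ => tsum_mul_right
  rw [← tsum_pstep_eqm hd hT A hx, hswap]
  exact (Finset.sum_congr rfl h2).symm

/-- The Laplace transform of `⟨L, e_A⟩` at nonpositive arguments. -/
lemma laplace_neg (hd : 0 < d) (hT : Summable (fun n => pstep d n 0 0)) {u : ℝ}
    (M : RIModel d u) (A : Finset (Lat d)) {t : ℝ} (ht : 0 ≤ t) :
    MeasureTheory.integral M.P
        (fun ω => Real.exp (-(t * ∑ x ∈ A, eqm d (↑A) x * M.L ω x)))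
      = Real.exp (-(u * (t / (1+t)) * ∑ x ∈ A, eqm d (↑A) x)) := by
  have h1t : (0:ℝ) < 1 + t := by linarith
  set V : Lat d → ℝ := fun x => t * eqm d (↑A) x with hV
  set w : Lat d → ℝ := fun _ => (1+t)⁻¹ with hw
  have hVnn : ∀ x, 0 ≤ V x := fun x => mul_nonneg ht (eqm_nonneg hd _ x)
  have hV0 : ∀ x ∉ A, V x = 0 := by
    intro x hx
    have : eqm d (↑A) x = 0 := eqm_eq_zero (fun h => hx (Finset.mem_coe.mp h))
    rw [hV]
    show t * eqm d (↑A) x = 0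
    rw [this, mul_zero]
  have hweq : ∀ x ∈ A, w x + ∑ y ∈ A, green d x y * V y * w y = 1 := by
    intro x hx
    have hsum : ∑ y ∈ A, green d x y * V y * w y
        = t * (1+t)⁻¹ * ∑ y ∈ A, green d x y * eqm d (↑A) y := by
      rw [Finset.mul_sum]
      exact Finset.sum_congr rfl fun y _ => by rw [hV, hw]; ring
    rw [hsum, green_eqm_ident hd hT A hx, hw]
    show (1+t)⁻¹ + t * (1+t)⁻¹ * 1 = 1
    field_simp
  have hl := M.laplace A V hVnn hV0 w hweq
  have hLHS : (fun ω => Real.exp (-∑ x ∈ A, V x * M.L ω x))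
      = fun ω => Real.exp (-(t * ∑ x ∈ A, eqm d (↑A) x * M.L ω x)) := by
    funext ω
    congr 1
    rw [Finset.mul_sum]
    congr 1
    exact Finset.sum_congr rfl fun x _ => by rw [hV]; ring
  have hRHS : u * ∑ x ∈ A, V x * w x = u * (t / (1+t)) * ∑ x ∈ A, eqm d (↑A) x := by
    have : ∑ x ∈ A, V x * w x = (t / (1+t)) * ∑ x ∈ A, eqm d (↑A) x := by
      rw [Finset.mul_sum]
      refine Finset.sum_congr rfl fun x _ => ?_
      rw [hV, hw]
      field_simp
    rw [this]
    ring
  rw [hLHS, hRHS] at hl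
  exact hl

/-- In the (impossible) non-summable case, the model axioms are contradictory. -/
lemma not_summable_absurd (hd : 0 < d) {u : ℝ} (hu : 0 < u) (M : RIModel d u)
    (hT : ¬ Summable (fun n => pstep d n 0 0)) : False := by
  letI := M.mΩ
  haveI := M.prob
  classical
  set A₀ : Finset (Lat d) := {0} with hA₀
  set e₀ : ℝ := eqm d (↑A₀) 0 with he₀
  have he₀nn : 0 ≤ e₀ := eqm_nonneg hd _ 0
  have he₀le : e₀ ≤ 1 := eqm_le_one hd _ 0
  have hdcap : dcap d (↑A₀) = e₀ := by
    unfold dcap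
    refine tsum_eq_single 0 ?_
    intro b hb
    refine eqm_eq_zero ?_
    intro hbmem
    exact hb (by simpa [hA₀] using hbmem)
  -- the avoidance probability
  set E : Set M.Ω := {ω | ∀ x ∈ A₀, M.L ω x = 0} with hE
  have havoid : M.P E = ENNReal.ofReal (Real.exp (-(u * e₀))) := by
    rw [hE, M.avoid A₀, hdcap]
  have hEeq : E = (fun ω => M.L ω 0) ⁻¹' {0} := by
    ext ω
    simp [hE, hA₀]
  have hmeasL : Measurable (fun ω => M.L ω 0) := (measurable_pi_apply 0).comp M.L_meas
  have hEmeas : MeasurableSet E := by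
    rw [hEeq]
    exact hmeasL (measurableSet_singleton 0)
  -- Laplace bound
  have hgreen : green d (0 : Lat d) 0 = 0 := tsum_eq_zero_of_not_summable hT
  have hlap : ∀ t : ℝ, 0 ≤ t →
      MeasureTheory.integral M.P (fun ω => Real.exp (-(t * M.L ω 0)))
        = Real.exp (-(u * t)) := by
    intro t ht
    set V : Lat d → ℝ := fun x => if x = 0 then t else 0 with hV
    have hVnn : ∀ x, 0 ≤ V x := by
      intro x; rw [hV]
      show (0:ℝ) ≤ if x = 0 then t else 0
      split
      · exact ht
      · exact le_refl 0
    have hV0 : ∀ x ∉ A₀, V x = 0 := by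
      intro x hx
      rw [hV]
      show (if x = 0 then t else 0) = 0
      rw [if_neg (fun h => hx (by simp [hA₀, h]))]
    have hweq : ∀ x ∈ A₀, (fun _ : Lat d => (1:ℝ)) x
        + ∑ y ∈ A₀, green d x y * V y * (fun _ : Lat d => (1:ℝ)) y = 1 := by
      intro x hx
      have hx0 : x = 0 := by simpa [hA₀] using hx
      subst hx0
      rw [hA₀]
      rw [Finset.sum_singleton]
      rw [hgreen]
      ring
    have hl := M.laplace A₀ V hVnn hV0 _ hweq
    have hL : (fun ω => Real.exp (-∑ x ∈ A₀, V x * M.L ω x))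
        = fun ω => Real.exp (-(t * M.L ω 0)) := by
      funext ω
      congr 1
      rw [hA₀, Finset.sum_singleton, hV]
      simp
    have hR : u * ∑ x ∈ A₀, V x * (fun _ : Lat d => (1:ℝ)) x = u * t := by
      rw [hA₀, Finset.sum_singleton, hV]
      simp
    rw [hL, hR] at hl
    exact hl
  -- probability of E is ≤ exp(-(u t)) for all t ≥ 0
  have hbound : ∀ t : ℝ, 0 ≤ t → (M.P E).toReal ≤ Real.exp (-(u * t)) := by
    intro t ht
    have hint2 : MeasureTheory.Integrable (fun ω => Real.exp (-(t * M.L ω 0))) M.P := by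
      refine MeasureTheory.Integrable.mono' (MeasureTheory.integrable_const 1)
        ?_ (Filter.Eventually.of_forall fun ω => ?_)
      · exact (Real.measurable_exp.comp ((measurable_const.mul hmeasL).neg)).aestronglyMeasurable
      · rw [Real.norm_eq_abs, abs_of_pos (Real.exp_pos _)]
        refine Real.exp_le_one_iff.mpr ?_
        have := M.L_nonneg ω 0
        nlinarith
    have hint1 : MeasureTheory.Integrable (E.indicator (fun _ => (1:ℝ))) M.P :=
      (MeasureTheory.integrable_const 1).indicator hEmeas
    have hle : ∀ ω, E.indicator (fun _ => (1:ℝ)) ω ≤ Real.exp (-(t * M.L ω 0)) := by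
      intro ω
      by_cases hω : ω ∈ E
      · rw [Set.indicator_of_mem hω]
        have hω0 : M.L ω 0 = 0 := by
          rw [hEeq] at hω
          exact hω
        rw [hω0, mul_zero, neg_zero, Real.exp_zero]
      · rw [Set.indicator_of_notMem hω]
        exact (Real.exp_pos _).le
    have := MeasureTheory.integral_mono hint1 hint2 hle
    rw [MeasureTheory.integral_indicator_const (1:ℝ) hEmeas] at this
    rw [hlap t ht] at this
    simpa [MeasureTheory.measureReal_def] using this
  have htr : (M.P E).toReal = Real.exp (-(u * e₀)) := by
    rw [havoid, ENNReal.toReal_ofReal (Real.exp_pos _).le]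
  have hcontr := hbound (e₀ + 1) (by linarith)
  rw [htr] at hcontr
  have := Real.exp_le_exp.mp hcontr
  nlinarith

end RIPf


section Binom
open Filter MeasureTheory Set
namespace RIPf

/-- Coefficients of the binomial series for `(1-y)^{-s}`. -/
def abin (s : ℝ) (j : ℕ) : ℝ := ∏ i ∈ Finset.range j, ((s + i) / (i + 1))

lemma abin_zero (s : ℝ) : abin s 0 = 1 := by simp [abin]

lemma abin_succ (s : ℝ) (j : ℕ) : abin s (j+1) = abin s j * ((s + j) / (j + 1)) := by
  rw [abin, Finset.prod_range_succ, ← abin]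

lemma abin_nonneg {s : ℝ} (hs : 0 ≤ s) (j : ℕ) : 0 ≤ abin s j :=
  Finset.prod_nonneg fun i _ => div_nonneg (by positivity) (by positivity)

lemma abin_le_one {s : ℝ} (hs0 : 0 ≤ s) (hs1 : s ≤ 1) (j : ℕ) : abin s j ≤ 1 := by
  refine Finset.prod_le_one (fun i _ => div_nonneg (by positivity) (by positivity)) ?_
  intro i _
  rw [div_le_one (by positivity)]
  have : (0:ℝ) ≤ (i:ℝ) := Nat.cast_nonneg i
  linarith

lemma abin_rec (s : ℝ) (j : ℕ) : ((j:ℝ)+1) * abin s (j+1) = (s + j) * abin s j := by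
  rw [abin_succ]
  have : ((j:ℝ)+1) ≠ 0 := by positivity
  field_simp

lemma abs_abin_le_one {s : ℝ} (hs0 : 0 ≤ s) (hs1 : s ≤ 1) (j : ℕ) : |abin s j| ≤ 1 := by
  rw [abs_of_nonneg (abin_nonneg hs0 j)]
  exact abin_le_one hs0 hs1 j

lemma summable_abin_pow {s : ℝ} (hs0 : 0 ≤ s) (hs1 : s ≤ 1) {y : ℝ} (hy : |y| < 1) :
    Summable (fun j => abin s j * y^j) := by
  refine Summable.of_abs ?_
  refine Summable.of_nonneg_of_le (fun j => abs_nonneg _) (fun j => ?_)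
    (summable_geometric_of_lt_one (abs_nonneg y) hy)
  rw [abs_mul, abs_pow]
  exact mul_le_of_le_one_left (pow_nonneg (abs_nonneg y) j) (abs_abin_le_one hs0 hs1 j)

lemma summable_deriv_bound {r : ℝ} (hr0 : 0 < r) (hr1 : r < 1) :
    Summable (fun j : ℕ => (j:ℝ) * r^(j-1)) := by
  have h1 : Summable (fun j : ℕ => ((j:ℝ)+1) * r^j) := by
    have h2 : Summable (fun j : ℕ => (j:ℝ)^(1:ℕ) * r^j) :=
      summable_pow_mul_geometric_of_norm_lt_one 1 (by rwa [Real.norm_eq_abs, abs_of_pos hr0])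
    have h3 : Summable (fun j : ℕ => r^j) := summable_geometric_of_lt_one hr0.le hr1
    have := h2.add h3
    refine this.congr fun j => ?_
    push_cast
    ring
  refine (summable_nat_add_iff 1).mp ?_
  refine h1.congr fun j => ?_
  simp

lemma summable_jabin_pow {s : ℝ} (hs0 : 0 ≤ s) (hs1 : s ≤ 1) {y : ℝ} (hy : |y| < 1) :
    Summable (fun j : ℕ => abin s j * ((j:ℝ) * y^(j-1))) := by
  set r : ℝ := (|y| + 1)/2 with hr
  have hyr : |y| < r := by rw [hr]; linarith
  have hr0 : 0 < r := by rw [hr]; positivity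
  have hr1 : r < 1 := by rw [hr]; linarith
  refine Summable.of_abs ?_
  refine Summable.of_nonneg_of_le (fun j => abs_nonneg _) (fun j => ?_) (summable_deriv_bound hr0 hr1)
  rw [abs_mul, abs_mul, abs_pow]
  calc |abin s j| * ((|(j:ℝ)|) * |y|^(j-1))
      ≤ 1 * ((|(j:ℝ)|) * |y|^(j-1)) := by
        refine mul_le_mul_of_nonneg_right (abs_abin_le_one hs0 hs1 j) ?_
        positivity
    _ = (j:ℝ) * |y|^(j-1) := by rw [one_mul, abs_of_nonneg (Nat.cast_nonneg j)]
    _ ≤ (j:ℝ) * r^(j-1) := by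
        refine mul_le_mul_of_nonneg_left ?_ (Nat.cast_nonneg j)
        exact pow_le_pow_left₀ (abs_nonneg y) hyr.le _

/-- Sum of the binomial series. -/
def gbin (s : ℝ) (y : ℝ) : ℝ := ∑' j, abin s j * y^j

/-- Termwise derivative of the binomial series. -/
def Dbin (s : ℝ) (y : ℝ) : ℝ := ∑' j : ℕ, abin s j * ((j:ℝ) * y^(j-1))

lemma hasDerivAt_gbin {s : ℝ} (hs0 : 0 ≤ s) (hs1 : s ≤ 1) {y : ℝ} (hy : |y| < 1) :
    HasDerivAt (gbin s) (Dbin s y) y := by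
  set r : ℝ := (|y| + 1)/2 with hr
  have hyr : |y| < r := by rw [hr]; linarith
  have hr0 : 0 < r := by rw [hr]; positivity
  have hr1 : r < 1 := by rw [hr]; linarith
  have hopen : IsOpen (Set.Ioo (-r) r) := isOpen_Ioo
  have hconn : IsPreconnected (Set.Ioo (-r) r) := isPreconnected_Ioo
  have hmem : y ∈ Set.Ioo (-r) r := by
    rw [Set.mem_Ioo]
    constructor
    · linarith [neg_abs_le y]
    · linarith [le_abs_self y]
  exact hasDerivAt_tsum_of_isPreconnected (summable_deriv_bound hr0 hr1) hopen hconn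
    (fun j z _ => (hasDerivAt_pow j z).const_mul (abin s j))
    (fun j z hz => by
      rw [Real.norm_eq_abs, abs_mul, abs_mul, abs_pow]
      have hz1 : |z| ≤ r := by
        rw [abs_le]
        exact ⟨(Set.mem_Ioo.mp hz).1.le, (Set.mem_Ioo.mp hz).2.le⟩
      calc |abin s j| * ((|(j:ℝ)|) * |z|^(j-1))
          ≤ 1 * ((|(j:ℝ)|) * |z|^(j-1)) := by
            refine mul_le_mul_of_nonneg_right (abs_abin_le_one hs0 hs1 j) ?_
            positivity
        _ = (j:ℝ) * |z|^(j-1) := by rw [one_mul, abs_of_nonneg (Nat.cast_nonneg j)]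
        _ ≤ (j:ℝ) * r^(j-1) := by
            refine mul_le_mul_of_nonneg_left ?_ (Nat.cast_nonneg j)
            exact pow_le_pow_left₀ (abs_nonneg z) hz1 _)
    hmem (summable_abin_pow hs0 hs1 hy) hmem

lemma ode_gbin {s : ℝ} (hs0 : 0 ≤ s) (hs1 : s ≤ 1) {y : ℝ} (hy : |y| < 1) :
    (1 - y) * Dbin s y = s * gbin s y := by
  have hS1 : Summable (fun j : ℕ => abin s j * ((j:ℝ) * y^(j-1))) := summable_jabin_pow hs0 hs1 hy
  have hSg : Summable (fun j => abin s j * y^j) := summable_abin_pow hs0 hs1 hy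
  have hSj : Summable (fun j : ℕ => (j:ℝ) * abin s j * y^j) := by
    refine Summable.of_abs ?_
    set r : ℝ := (|y| + 1)/2 with hr
    have hyr : |y| < r := by rw [hr]; linarith
    have hr0 : 0 < r := by rw [hr]; positivity
    have hr1 : r < 1 := by rw [hr]; linarith
    have hgeom : Summable (fun j : ℕ => (j:ℝ) * r^j) := by
      have := summable_pow_mul_geometric_of_norm_lt_one (R := ℝ) 1
        (by rwa [Real.norm_eq_abs, abs_of_pos hr0])
      simpa using this
    refine Summable.of_nonneg_of_le (fun j => abs_nonneg _) (fun j => ?_) hgeom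
    rw [abs_mul, abs_mul, abs_pow]
    calc |(j:ℝ)| * |abin s j| * |y|^j
        ≤ |(j:ℝ)| * 1 * r^j := by
          refine mul_le_mul (mul_le_mul_of_nonneg_left (abs_abin_le_one hs0 hs1 j) (abs_nonneg _))
            (pow_le_pow_left₀ (abs_nonneg y) hyr.le j) (by positivity) (by positivity)
      _ = (j:ℝ) * r^j := by rw [mul_one, abs_of_nonneg (Nat.cast_nonneg j)]
  -- peel the first term of Dbin
  have hD : Dbin s y = ∑' j : ℕ, abin s (j+1) * (((j:ℕ)+1:ℝ) * y^j) := by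
    rw [Dbin, Summable.tsum_eq_zero_add hS1]
    have h0 : abin s 0 * (((0:ℕ):ℝ) * y^(0-1)) = 0 := by norm_num
    rw [h0, zero_add]
    refine tsum_congr fun j => ?_
    rw [Nat.add_sub_cancel]
    push_cast
    ring
  have hterm : ∀ j : ℕ, abin s (j+1) * (((j:ℕ)+1:ℝ) * y^j) = (s + j) * abin s j * y^j := by
    intro j
    calc abin s (j+1) * (((j:ℕ)+1:ℝ) * y^j) = (((j:ℝ)+1) * abin s (j+1)) * y^j := by
          push_cast; ring
      _ = ((s+j) * abin s j) * y^j := by rw [abin_rec]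
      _ = (s + j) * abin s j * y^j := by ring
  have hD2 : Dbin s y = ∑' j : ℕ, (s + j) * abin s j * y^j := by
    rw [hD]
    exact tsum_congr hterm
  have hsplit : ∑' j : ℕ, (s + j) * abin s j * y^j
      = s * gbin s y + ∑' j : ℕ, (j:ℝ) * abin s j * y^j := by
    have h1 : ∀ j : ℕ, (s + j) * abin s j * y^j
        = s * (abin s j * y^j) + (j:ℝ) * abin s j * y^j := fun j => by ring
    rw [tsum_congr h1, Summable.tsum_add (hSg.mul_left s) hSj, tsum_mul_left]
    rfl
  have hyD : ∑' j : ℕ, (j:ℝ) * abin s j * y^j = y * Dbin s y := by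
    rw [Dbin, ← tsum_mul_left]
    refine tsum_congr fun j => ?_
    cases j with
    | zero => simp
    | succ j =>
      rw [Nat.add_sub_cancel]
      push_cast
      rw [pow_succ]
      ring
  have heq : Dbin s y = s * gbin s y + y * Dbin s y := by
    calc Dbin s y = ∑' j : ℕ, (s + j) * abin s j * y^j := hD2
      _ = s * gbin s y + ∑' j : ℕ, (j:ℝ) * abin s j * y^j := hsplit
      _ = s * gbin s y + y * Dbin s y := by rw [hyD]
  linear_combination heq

lemma gbin_zero (s : ℝ) : gbin s 0 = 1 := by
  rw [gbin]
  rw [tsum_eq_single 0 (fun j hj => ?_)]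
  · rw [abin_zero, pow_zero, mul_one]
  · rw [zero_pow hj, mul_zero]

lemma gbin_eq {s : ℝ} (hs0 : 0 ≤ s) (hs1 : s ≤ 1) {y : ℝ} (hy0 : 0 ≤ y) (hy1 : y < 1) :
    gbin s y * (1 - y) ^ s = 1 := by
  set h : ℝ → ℝ := fun z => gbin s z * (1 - z) ^ s with hh
  have key : ∀ z ∈ Set.Icc (0:ℝ) y, |z| < 1 := by
    intro z hz
    rw [abs_lt]
    constructor
    · linarith [hz.1]
    · linarith [hz.2]
  have hderiv : ∀ z ∈ Set.Icc (0:ℝ) y, HasDerivAt h 0 z := by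
    intro z hz
    have hz1 : |z| < 1 := key z hz
    have hz2 : (0:ℝ) < 1 - z := by
      have := lt_of_abs_lt hz1
      linarith
    have h1 : HasDerivAt (fun z : ℝ => 1 - z) (-1) z := by
      simpa using (hasDerivAt_id z).const_sub 1
    have h2 : HasDerivAt (fun z : ℝ => (1 - z) ^ s) (s * (1-z)^(s-1) * (-1)) z := by
      exact (Real.hasDerivAt_rpow_const (Or.inl hz2.ne')).comp z h1
    have h3 := (hasDerivAt_gbin hs0 hs1 hz1).mul h2
    have hzero : Dbin s z * (1 - z) ^ s + gbin s z * (s * (1-z)^(s-1) * (-1)) = 0 := by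
      have hode := ode_gbin hs0 hs1 hz1
      have hpow : (1 - z) ^ s = (1-z)^(s-1) * (1 - z) := by
        rw [← Real.rpow_add_one hz2.ne' (s-1)]
        ring_nf
      rw [hpow]
      linear_combination ((1-z)^(s-1)) * hode
    rw [hzero] at h3
    exact h3
  have hcont : ContinuousOn h (Set.Icc 0 y) :=
    fun z hz => ((hderiv z hz).continuousAt).continuousWithinAt
  have := constant_of_has_deriv_right_zero hcont
    (fun z hz => ((hderiv z (Set.mem_Icc_of_Ico hz)).hasDerivWithinAt)) y
    (Set.mem_Icc.mpr ⟨hy0, le_refl y⟩)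
  have h0 : h 0 = 1 := by
    rw [hh]
    show gbin s 0 * (1 - 0) ^ s = 1
    rw [gbin_zero]
    norm_num
  rw [h0] at this
  exact this

/-- The binomial-series identity in the form needed: expansion of `e^{sx}`. -/
lemma binom_hasSum {s : ℝ} (hs0 : 0 ≤ s) (hs1 : s < 1) {x : ℝ} (hx : 0 ≤ x) :
    HasSum (fun j => abin s j * (1 - Real.exp (-x))^j) (Real.exp (s * x)) := by
  set y : ℝ := 1 - Real.exp (-x) with hy
  have hy0 : 0 ≤ y := by
    rw [hy]
    have : Real.exp (-x) ≤ 1 := Real.exp_le_one_iff.mpr (by linarith)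
    linarith
  have hy1 : y < 1 := by
    rw [hy]
    have := Real.exp_pos (-x)
    linarith
  have habs : |y| < 1 := by rw [abs_of_nonneg hy0]; exact hy1
  have hsum := summable_abin_pow hs0 hs1.le habs
  have hval : gbin s y = Real.exp (s * x) := by
    have h1 := gbin_eq hs0 hs1.le hy0 hy1
    have h2 : (1 - y) = Real.exp (-x) := by rw [hy]; ring
    rw [h2] at h1
    have h3 : (Real.exp (-x)) ^ s = Real.exp (-(s*x)) := by
      rw [Real.rpow_def_of_pos (Real.exp_pos _), Real.log_exp]
      ring_nf
    rw [h3] at h1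
    have h4 : Real.exp (-(s*x)) = (Real.exp (s*x))⁻¹ := by
      rw [Real.exp_neg]
    rw [h4] at h1
    field_simp at h1
    linarith [h1]
  rw [← hval]
  exact hsum.hasSum

end RIPf
end Binom

section Kmod
open Filter MeasureTheory Set
namespace RIPf

/-- Coefficients of the compound-Poisson density. -/
def cp (lam : ℝ) (p : ℕ) : ℝ := Real.exp (-lam) * lam^(p+1) / ((p+1).factorial * p.factorial)

lemma cp_nonneg {lam : ℝ} (hlam : 0 ≤ lam) (p : ℕ) : 0 ≤ cp lam p := by
  unfold cp
  positivity

lemma summable_cp_pow {lam : ℝ} (hlam : 0 ≤ lam) {t : ℝ} (ht : 0 ≤ t) :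
    Summable (fun p => cp lam p * t^p) := by
  have hdom : Summable (fun p => (Real.exp (-lam) * lam) * ((lam*t)^p / p.factorial)) :=
    (Real.summable_pow_div_factorial (lam*t)).mul_left _
  refine Summable.of_nonneg_of_le (fun p => mul_nonneg (cp_nonneg hlam p) (pow_nonneg ht p))
    (fun p => ?_) hdom
  have h2 : (0:ℝ) < p.factorial := by exact_mod_cast p.factorial_pos
  have h3 : (1:ℝ) ≤ (p+1).factorial := by exact_mod_cast (p+1).factorial_pos
  have hD : ((p.factorial:ℝ)) ≤ ((p+1).factorial :ℝ) * (p.factorial:ℝ) := by nlinarith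
  have h4 : cp lam p ≤ Real.exp (-lam) * lam^(p+1) / p.factorial := by
    unfold cp
    gcongr
  calc cp lam p * t^p ≤ (Real.exp (-lam) * lam^(p+1) / p.factorial) * t^p :=
      mul_le_mul_of_nonneg_right h4 (pow_nonneg ht p)
    _ = Real.exp (-lam) * lam * ((lam*t)^p / p.factorial) := by
        rw [mul_pow, pow_succ]
        ring

/-- ENNReal version of the compound-Poisson density (manifestly measurable). -/
def kfun (lam : ℝ) (x : ℝ) : ℝ≥0∞ := ∑' p, ENNReal.ofReal (cp lam p * x^p * Real.exp (-x))

lemma kfun_measurable (lam : ℝ) : Measurable (kfun lam) := by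
  refine Measurable.ennreal_tsum fun p => ?_
  refine ENNReal.measurable_ofReal.comp ?_
  exact ((measurable_id.pow_const p).const_mul (cp lam p)).mul
    (Real.measurable_exp.comp measurable_neg)

/-- The real compound-Poisson density. -/
def Kfun (lam : ℝ) (x : ℝ) : ℝ := (kfun lam x).toReal

lemma Kfun_measurable (lam : ℝ) : Measurable (Kfun lam) :=
  (kfun_measurable lam).ennreal_toReal

lemma Kfun_nonneg (lam : ℝ) (x : ℝ) : 0 ≤ Kfun lam x := by
  unfold Kfun
  exact ENNReal.toReal_nonneg

lemma kfun_eq {lam : ℝ} (hlam : 0 ≤ lam) {x : ℝ} (hx : 0 ≤ x) :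
    kfun lam x = ENNReal.ofReal (∑' p, cp lam p * x^p * Real.exp (-x)) := by
  rw [ENNReal.ofReal_tsum_of_nonneg
    (fun p => mul_nonneg (mul_nonneg (cp_nonneg hlam p) (pow_nonneg hx p)) (Real.exp_pos _).le)
    (((summable_cp_pow hlam hx)).mul_right _)]
  rfl

lemma kfun_ne_top {lam : ℝ} (hlam : 0 ≤ lam) {x : ℝ} (hx : 0 ≤ x) : kfun lam x ≠ ⊤ := by
  rw [kfun_eq hlam hx]
  exact ENNReal.ofReal_ne_top

lemma Kfun_eq {lam : ℝ} (hlam : 0 ≤ lam) {x : ℝ} (hx : 0 ≤ x) :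
    Kfun lam x = ∑' p, cp lam p * x^p * Real.exp (-x) := by
  rw [Kfun, kfun_eq hlam hx, ENNReal.toReal_ofReal]
  exact tsum_nonneg (fun p =>
    mul_nonneg (mul_nonneg (cp_nonneg hlam p) (pow_nonneg hx p)) (Real.exp_pos _).le)

lemma integrableOn_pow_exp {c : ℝ} (hc : 0 < c) (p : ℕ) :
    IntegrableOn (fun x : ℝ => x^p * Real.exp (-(c*x))) (Ioi 0) := by
  have h := integrableOn_rpow_mul_exp_neg_mul_rpow (p := 1) (s := (p:ℝ))
    (lt_of_lt_of_le neg_one_lt_zero (Nat.cast_nonneg p)) one_pos hc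
  refine h.congr_fun ?_ measurableSet_Ioi
  intro x hx
  simp only [Real.rpow_natCast, Real.rpow_one, neg_mul]

lemma integral_pow_exp {c : ℝ} (hc : 0 < c) (p : ℕ) :
    ∫ x in Ioi (0:ℝ), x^p * Real.exp (-(c*x)) = p.factorial / c^(p+1) := by
  have h := Real.integral_rpow_mul_exp_neg_mul_Ioi (a := (p:ℝ)+1) (by positivity) hc
  have h1 : ∀ x ∈ Ioi (0:ℝ), x ^ ((p:ℝ)+1-1) * Real.exp (-(c*x)) = x^p * Real.exp (-(c*x)) := by
    intro x _
    rw [add_sub_cancel_right, Real.rpow_natCast]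
  rw [setIntegral_congr_fun measurableSet_Ioi h1] at h
  rw [h]
  have h2 : Real.Gamma ((p:ℝ)+1) = p.factorial := by
    exact_mod_cast Real.Gamma_nat_eq_factorial p
  rw [h2]
  have h3 : ((1:ℝ)/c) ^ ((p:ℝ)+1) = (1/c)^(p+1 : ℕ) := by
    rw [show ((p:ℝ)+1) = ((p+1 : ℕ):ℝ) by push_cast; ring, Real.rpow_natCast]
  rw [h3, div_pow, one_pow]
  ring

lemma exp_sub_one_eq {z : ℝ} :
    (∑' p : ℕ, z^(p+1)/(p+1).factorial) = Real.exp z - 1 := by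
  have hexp : Real.exp z = ∑' p : ℕ, z^p / p.factorial := by
    rw [Real.exp_eq_exp_ℝ, NormedSpace.exp_eq_tsum_div]
  have hsum : Summable (fun p : ℕ => z^p / p.factorial) := Real.summable_pow_div_factorial z
  have := Summable.tsum_eq_zero_add hsum
  rw [hexp, this]
  simp

/-- CORE: the Laplace-type transform of the density `K`. -/
lemma lint_K_exp {lam : ℝ} (hlam : 0 ≤ lam) {r : ℝ} (hr : r < 1) :
    (∫⁻ x in Ioi (0:ℝ), ENNReal.ofReal (Kfun lam x * Real.exp (r * x)))
      = ENNReal.ofReal (Real.exp (-lam) * (Real.exp (lam / (1 - r)) - 1)) := by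
  have h1r : 0 < 1 - r := by linarith
  -- pointwise rewriting on Ioi 0
  have hpt : ∀ x ∈ Ioi (0:ℝ), ENNReal.ofReal (Kfun lam x * Real.exp (r * x))
      = ∑' p, ENNReal.ofReal (cp lam p * x^p * Real.exp (-((1-r)*x))) := by
    intro x hx
    have hx0 : (0:ℝ) ≤ x := (mem_Ioi.mp hx).le
    have hKx : Kfun lam x * Real.exp (r*x) = ∑' p, cp lam p * x^p * Real.exp (-((1-r)*x)) := by
      rw [Kfun_eq hlam hx0, ← tsum_mul_right]
      refine tsum_congr fun p => ?_
      rw [mul_assoc (cp lam p * x^p), ← Real.exp_add]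
      congr 1
      ring
    rw [hKx]
    refine ENNReal.ofReal_tsum_of_nonneg
      (fun p => mul_nonneg (mul_nonneg (cp_nonneg hlam p) (pow_nonneg hx0 p)) (Real.exp_pos _).le)
      ((summable_cp_pow hlam hx0).mul_right _)
  rw [setLIntegral_congr_fun measurableSet_Ioi hpt]
  have hmeas : ∀ p : ℕ, AEMeasurable
      (fun x : ℝ => ENNReal.ofReal (cp lam p * x^p * Real.exp (-((1-r)*x))))
      (volume.restrict (Ioi 0)) := by
    intro p
    exact (((measurable_id.pow_const p).const_mul (cp lam p)).mul
      ((measurable_id.const_mul (1-r)).neg.exp)).ennreal_ofReal.aemeasurable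
  rw [lintegral_tsum hmeas]
  -- each term
  have hterm : ∀ p : ℕ, (∫⁻ x in Ioi (0:ℝ), ENNReal.ofReal (cp lam p * x^p * Real.exp (-((1-r)*x))))
      = ENNReal.ofReal (cp lam p * (p.factorial / (1-r)^(p+1))) := by
    intro p
    have hint : IntegrableOn (fun x : ℝ => cp lam p * (x^p * Real.exp (-((1-r)*x)))) (Ioi 0) :=
      (integrableOn_pow_exp h1r p).const_mul _
    have hnn : 0 ≤ᵐ[volume.restrict (Ioi (0:ℝ))] fun x => cp lam p * (x^p * Real.exp (-((1-r)*x))) := by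
      refine (ae_restrict_iff' measurableSet_Ioi).mpr (Filter.Eventually.of_forall fun x hx => ?_)
      have : (0:ℝ) ≤ x := (mem_Ioi.mp hx).le
      have := cp_nonneg hlam p
      positivity
    have := MeasureTheory.ofReal_integral_eq_lintegral_ofReal hint hnn
    simp only [mul_assoc]
    rw [← this]
    rw [integral_const_mul, integral_pow_exp h1r p]
  rw [tsum_congr hterm]
  -- sum the series
  have hsummand : ∀ p : ℕ, cp lam p * ((p.factorial:ℝ) / (1-r)^(p+1))
      = (lam/(1-r))^(p+1) / (p+1).factorial * Real.exp (-lam) := by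
    intro p
    unfold cp
    have h1 : ((p.factorial:ℝ)) ≠ 0 := by positivity
    have h2 : ((p+1).factorial:ℝ) ≠ 0 := by positivity
    have h3 : (1:ℝ) - r ≠ 0 := h1r.ne'
    rw [div_pow]
    field_simp
  rw [tsum_congr fun p => congrArg ENNReal.ofReal (hsummand p)]
  have hsum2 : Summable (fun p : ℕ => (lam/(1-r))^(p+1) / (p+1).factorial * Real.exp (-lam)) := by
    refine Summable.mul_right _ ?_
    have hfull := Real.summable_pow_div_factorial (lam/(1-r))
    exact (summable_nat_add_iff 1).mpr hfull
  rw [← ENNReal.ofReal_tsum_of_nonneg (fun p => mul_nonneg (div_nonneg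
    (pow_nonneg (div_nonneg hlam h1r.le) _) (by positivity)) (Real.exp_pos _).le) hsum2]
  congr 1
  rw [tsum_mul_right, exp_sub_one_eq]
  ring

lemma integrable_K {lam : ℝ} (hlam : 0 ≤ lam) : IntegrableOn (Kfun lam) (Ioi 0) := by
  constructor
  · exact (Kfun_measurable lam).aestronglyMeasurable
  · rw [hasFiniteIntegral_iff_ofReal (Filter.Eventually.of_forall fun x => Kfun_nonneg lam x)]
    have hlint := lint_K_exp hlam (r := 0) (by norm_num)
    have heq : ∀ x : ℝ, ENNReal.ofReal (Kfun lam x * Real.exp (0 * x))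
        = ENNReal.ofReal (Kfun lam x) := by
      intro x; rw [zero_mul, Real.exp_zero, mul_one]
    rw [lintegral_congr heq] at hlint
    rw [hlint]
    exact ENNReal.ofReal_lt_top

lemma integrable_K_mul {lam : ℝ} (hlam : 0 ≤ lam) {h : ℝ → ℝ} (hmeas : Measurable h)
    (hbd : ∀ x ∈ Ioi (0:ℝ), |h x| ≤ 1) :
    IntegrableOn (fun x => Kfun lam x * h x) (Ioi 0) := by
  refine Integrable.mono' (integrable_K hlam)
    ((Kfun_measurable lam).mul hmeas).aestronglyMeasurable ?_
  refine (ae_restrict_iff' measurableSet_Ioi).mpr (Filter.Eventually.of_forall fun x hx => ?_)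
  rw [Real.norm_eq_abs, abs_mul]
  calc |Kfun lam x| * |h x| ≤ |Kfun lam x| * 1 :=
      mul_le_mul_of_nonneg_left (hbd x hx) (abs_nonneg _)
    _ = Kfun lam x := by rw [mul_one, abs_of_nonneg (Kfun_nonneg lam x)]

lemma integral_K_exp {lam : ℝ} (hlam : 0 ≤ lam) {r : ℝ} (hr : r ≤ 0) :
    ∫ x in Ioi (0:ℝ), Kfun lam x * Real.exp (r * x)
      = Real.exp (-lam) * (Real.exp (lam / (1 - r)) - 1) := by
  have hint : IntegrableOn (fun x => Kfun lam x * Real.exp (r*x)) (Ioi 0) := by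
    refine integrable_K_mul hlam ((measurable_id.const_mul r).exp) (fun x hx => ?_)
    rw [abs_of_pos (Real.exp_pos _)]
    refine Real.exp_le_one_iff.mpr ?_
    have hx0 : 0 < x := mem_Ioi.mp hx
    nlinarith
  have hnn : 0 ≤ᵐ[volume.restrict (Ioi (0:ℝ))] fun x => Kfun lam x * Real.exp (r*x) :=
    Filter.Eventually.of_forall fun x => mul_nonneg (Kfun_nonneg lam x) (Real.exp_pos _).le
  have hco := MeasureTheory.ofReal_integral_eq_lintegral_ofReal hint hnn
  rw [lint_K_exp hlam (lt_of_le_of_lt hr one_pos)] at hco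
  have h1 : 0 ≤ ∫ x in Ioi (0:ℝ), Kfun lam x * Real.exp (r*x) := integral_nonneg_of_ae hnn
  have h2 : (0:ℝ) ≤ Real.exp (-lam) * (Real.exp (lam / (1 - r)) - 1) := by
    have h1r : (0:ℝ) < 1 - r := by linarith
    have : (1:ℝ) ≤ Real.exp (lam / (1-r)) :=
      Real.one_le_exp (div_nonneg hlam h1r.le)
    have := Real.exp_pos (-lam)
    nlinarith
  exact (ENNReal.ofReal_eq_ofReal_iff h1 h2).mp hco

/-- Generic binomial expansion of `∫ w (1-g)^j`. -/
lemma expand_pow_integral {α : Type*} [m : MeasurableSpace α] {μ : MeasureTheory.Measure α}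
    {w g : α → ℝ} (hwg : ∀ i : ℕ, Integrable (fun a => w a * g a ^ i) μ) (j : ℕ) :
    ∫ a, w a * (1 - g a)^j ∂μ
      = ∑ i ∈ Finset.range (j+1), ((-1:ℝ)^i * (j.choose i)) * ∫ a, w a * g a ^ i ∂μ := by
  have hpt : ∀ a, w a * (1 - g a)^j
      = ∑ i ∈ Finset.range (j+1), ((-1:ℝ)^i * (j.choose i)) * (w a * g a ^ i) := by
    intro a
    have h1 : (1 - g a) = (-(g a)) + 1 := by ring
    rw [h1, add_pow, Finset.mul_sum]
    refine Finset.sum_congr rfl fun i hi => ?_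
    rw [neg_pow]
    ring
  rw [show (fun a => w a * (1 - g a)^j)
    = fun a => ∑ i ∈ Finset.range (j+1), ((-1:ℝ)^i * (j.choose i)) * (w a * g a ^ i)
    from funext hpt]
  rw [integral_finset_sum _ (fun i _ => (hwg i).const_mul _)]
  exact Finset.sum_congr rfl fun i _ => integral_const_mul _ _

lemma alternating_choose_real (j : ℕ) :
    ∑ i ∈ Finset.range (j+1), ((-1:ℝ)^i * (j.choose i)) = if j = 0 then 1 else 0 := by
  have h := Int.alternating_sum_range_choose (n := j)
  have := congrArg (fun z : ℤ => (z : ℝ)) h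
  push_cast at this
  rw [this]

end RIPf
end Kmod


section MainAnalytic
namespace RIPf
open Filter MeasureTheory Set
open scoped ENNReal

set_option maxHeartbeats 2000000 in
/-- The analytic core: from the Laplace transform values at nonnegative integers
(of compound-Poisson-exponential form), deduce the exponential moment for `0 < s < 1`. -/
lemma main_analytic {Ω : Type} [mΩ : MeasurableSpace Ω] (P : MeasureTheory.Measure Ω)
    [MeasureTheory.IsProbabilityMeasure P]
    (B : Ω → ℝ) (hBmeas : Measurable B) (hBnn : ∀ ω, 0 ≤ B ω)
    {lam : ℝ} (hlam : 0 ≤ lam)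
    (hpsi : ∀ i : ℕ, (∫ ω, Real.exp (-((i:ℝ) * B ω)) ∂P)
      = Real.exp (-lam) * Real.exp (lam / (1 + (i:ℝ))))
    {s : ℝ} (hs0 : 0 < s) (hs1 : s < 1) :
    ∫ ω, Real.exp (s * B ω) ∂P = Real.exp (lam * s / (1 - s)) := by
  have h1s : (0:ℝ) < 1 - s := by linarith
  have hgmeas : Measurable (fun ω => Real.exp (-(B ω))) := hBmeas.neg.exp
  have hgbd : ∀ ω, Real.exp (-(B ω)) ≤ 1 := fun ω =>
    Real.exp_le_one_iff.mpr (neg_nonpos.mpr (hBnn ω))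
  have hxbd : ∀ x : ℝ, 0 ≤ x → Real.exp (-x) ≤ 1 := fun x hx =>
    Real.exp_le_one_iff.mpr (neg_nonpos.mpr hx)
  -- integrability of powers of exp(-B)
  have hIpow : ∀ i : ℕ, Integrable (fun ω => Real.exp (-(B ω)) ^ i) P := by
    intro i
    refine Integrable.mono' (integrable_const 1) (hgmeas.pow_const i).aestronglyMeasurable ?_
    refine Filter.Eventually.of_forall fun ω => ?_
    rw [Real.norm_eq_abs, abs_pow, abs_of_pos (Real.exp_pos _)]
    exact pow_le_one₀ (Real.exp_pos _).le (hgbd ω)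
  -- value of those integrals
  have hIexp_val : ∀ i : ℕ, (∫ ω, Real.exp (-(B ω)) ^ i ∂P)
      = Real.exp (-lam) * Real.exp (lam / (1 + (i:ℝ))) := by
    intro i
    rw [← hpsi i]
    refine integral_congr_ae (Filter.Eventually.of_forall fun ω => ?_)
    show Real.exp (-(B ω)) ^ i = Real.exp (-((i:ℝ) * B ω))
    rw [← Real.exp_nat_mul]
    congr 1
    ring
  -- integrability on the half-line
  have hKint : ∀ i : ℕ, IntegrableOn (fun x : ℝ => Kfun lam x * Real.exp (-x) ^ i) (Ioi 0) := by
    intro i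
    refine integrable_K_mul hlam ((measurable_neg.exp).pow_const i) (fun x hx => ?_)
    rw [abs_pow, abs_of_pos (Real.exp_pos _)]
    exact pow_le_one₀ (Real.exp_pos _).le (hxbd x (mem_Ioi.mp hx).le)
  have hKjint : ∀ j : ℕ, IntegrableOn (fun x : ℝ => Kfun lam x * (1 - Real.exp (-x))^j) (Ioi 0) := by
    intro j
    refine integrable_K_mul hlam ((measurable_const.sub (measurable_neg.exp)).pow_const j)
      (fun x hx => ?_)
    rw [abs_pow]
    refine pow_le_one₀ (abs_nonneg _) ?_
    rw [abs_le]
    have h1 := hxbd x (mem_Ioi.mp hx).le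
    have h2 := (Real.exp_pos (-x)).le
    constructor <;> linarith
  have hKjnn : ∀ j : ℕ, (0:ℝ) ≤ ∫ x in Ioi (0:ℝ), Kfun lam x * (1 - Real.exp (-x))^j := by
    intro j
    refine integral_nonneg_of_ae ((ae_restrict_iff' measurableSet_Ioi).mpr
      (Filter.Eventually.of_forall fun x hx => ?_))
    have h1 := hxbd x (mem_Ioi.mp hx).le
    exact mul_nonneg (Kfun_nonneg _ _) (pow_nonneg (by linarith) j)
  -- value of the half-line integrals
  have hKval : ∀ i : ℕ, (∫ x in Ioi (0:ℝ), Kfun lam x * Real.exp (-x) ^ i)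
      = Real.exp (-lam) * Real.exp (lam / (1 + (i:ℝ))) - Real.exp (-lam) := by
    intro i
    have hri : (-(i:ℝ)) ≤ 0 := neg_nonpos.mpr (Nat.cast_nonneg i)
    have hK := integral_K_exp hlam hri
    have hcong : (fun x : ℝ => Kfun lam x * Real.exp (-x) ^ i)
        = fun x : ℝ => Kfun lam x * Real.exp ((-(i:ℝ)) * x) := by
      funext x
      rw [← Real.exp_nat_mul]
      congr 2
      ring
    rw [hcong, hK]
    have h2 : 1 - (-(i:ℝ)) = 1 + (i:ℝ) := by ring
    rw [h2]
    ring
  -- the key identity for the moments of (1 - exp(-B))^j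
  have hbval : ∀ j : ℕ, (∫ ω, (1 - Real.exp (-(B ω)))^j ∂P)
      = (if j = 0 then Real.exp (-lam) else 0)
        + ∫ x in Ioi (0:ℝ), Kfun lam x * (1 - Real.exp (-x))^j := by
    intro j
    have hexp1 : (∫ ω, (1 - Real.exp (-(B ω)))^j ∂P)
        = ∑ i ∈ Finset.range (j+1), ((-1:ℝ)^i * (j.choose i))
            * ∫ ω, Real.exp (-(B ω)) ^ i ∂P := by
      have h := expand_pow_integral (μ := P) (w := fun _ => (1:ℝ))
        (g := fun ω => Real.exp (-(B ω))) (fun i => by simpa using hIpow i) j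
      simpa using h
    have hexp2 : (∫ x in Ioi (0:ℝ), Kfun lam x * (1 - Real.exp (-x))^j)
        = ∑ i ∈ Finset.range (j+1), ((-1:ℝ)^i * (j.choose i))
            * ∫ x in Ioi (0:ℝ), Kfun lam x * Real.exp (-x) ^ i :=
      expand_pow_integral (fun i => hKint i) j
    rw [hexp1, hexp2]
    simp only [hIexp_val, hKval]
    have hsub : ∀ i ∈ Finset.range (j+1), ((-1:ℝ)^i * (j.choose i))
          * (Real.exp (-lam) * Real.exp (lam / (1 + (i:ℝ))) - Real.exp (-lam))
        = ((-1:ℝ)^i * (j.choose i)) * (Real.exp (-lam) * Real.exp (lam / (1 + (i:ℝ))))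
          - ((-1:ℝ)^i * (j.choose i)) * Real.exp (-lam) := by
      intro i _
      ring
    rw [Finset.sum_congr rfl hsub, Finset.sum_sub_distrib, ← Finset.sum_mul,
      alternating_choose_real j]
    split <;> ring
  -- measurability helpers
  have hmeasj : ∀ j : ℕ, Measurable (fun ω => ENNReal.ofReal (abin s j * (1 - Real.exp (-(B ω)))^j)) :=
    fun j => (((measurable_const.sub hgmeas).pow_const j).const_mul (abin s j)).ennreal_ofReal
  have hmeasKj : ∀ j : ℕ, Measurable (fun x : ℝ => ENNReal.ofReal (Kfun lam x * (1 - Real.exp (-x))^j)) :=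
    fun j => ((Kfun_measurable lam).mul
      ((measurable_const.sub (measurable_neg.exp)).pow_const j)).ennreal_ofReal
  have hmeasKj' : ∀ j : ℕ, Measurable (fun x : ℝ => ENNReal.ofReal (abin s j * (Kfun lam x * (1 - Real.exp (-x))^j))) :=
    fun j => (((Kfun_measurable lam).mul
      ((measurable_const.sub (measurable_neg.exp)).pow_const j)).const_mul (abin s j)).ennreal_ofReal
  have hIj : ∀ j : ℕ, Integrable (fun ω => abin s j * (1 - Real.exp (-(B ω)))^j) P := by
    intro j
    refine Integrable.const_mul ?_ _
    refine Integrable.mono' (integrable_const 1)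
      ((measurable_const.sub hgmeas).pow_const j).aestronglyMeasurable ?_
    refine Filter.Eventually.of_forall fun ω => ?_
    rw [Real.norm_eq_abs, abs_pow]
    refine pow_le_one₀ (abs_nonneg _) ?_
    rw [abs_le]
    have h1 := hgbd ω
    have h2 := (Real.exp_pos (-(B ω))).le
    constructor <;> linarith
  -- the ENNReal computation
  have hTeq : (∫⁻ ω, ENNReal.ofReal (Real.exp (s * B ω)) ∂P)
      = ENNReal.ofReal (Real.exp (lam * s / (1 - s))) := by
    have hpt : ∀ ω, ENNReal.ofReal (Real.exp (s * B ω))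
        = ∑' j, ENNReal.ofReal (abin s j * (1 - Real.exp (-(B ω)))^j) := by
      intro ω
      have hhs := binom_hasSum hs0.le hs1 (hBnn ω)
      rw [← hhs.tsum_eq]
      refine ENNReal.ofReal_tsum_of_nonneg (fun j => ?_) hhs.summable
      have h1 := hgbd ω
      exact mul_nonneg (abin_nonneg hs0.le j) (pow_nonneg (by linarith) j)
    rw [lintegral_congr hpt, lintegral_tsum (fun j => (hmeasj j).aemeasurable)]
    have hstep2 : ∀ j : ℕ, (∫⁻ ω, ENNReal.ofReal (abin s j * (1 - Real.exp (-(B ω)))^j) ∂P)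
        = ENNReal.ofReal (abin s j * ((if j = 0 then Real.exp (-lam) else 0)
            + ∫ x in Ioi (0:ℝ), Kfun lam x * (1 - Real.exp (-x))^j)) := by
      intro j
      rw [← ofReal_integral_eq_lintegral_ofReal (hIj j)
        (Filter.Eventually.of_forall fun ω => by
          have h1 := hgbd ω
          exact mul_nonneg (abin_nonneg hs0.le j) (pow_nonneg (by linarith) j))]
      rw [integral_const_mul, hbval j]
    rw [tsum_congr hstep2]
    have hatomnn : ∀ j : ℕ, (0:ℝ) ≤ abin s j * (if j = 0 then Real.exp (-lam) else 0) := by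
      intro j
      refine mul_nonneg (abin_nonneg hs0.le j) ?_
      split
      · exact (Real.exp_pos _).le
      · exact le_refl 0
    have hsplitj : ∀ j : ℕ, ENNReal.ofReal (abin s j * ((if j = 0 then Real.exp (-lam) else 0)
            + ∫ x in Ioi (0:ℝ), Kfun lam x * (1 - Real.exp (-x))^j))
        = ENNReal.ofReal (abin s j * (if j = 0 then Real.exp (-lam) else 0))
          + ENNReal.ofReal (abin s j)
            * ∫⁻ x in Ioi (0:ℝ), ENNReal.ofReal (Kfun lam x * (1 - Real.exp (-x))^j) := by
      intro j
      rw [mul_add, ENNReal.ofReal_add (hatomnn j) (mul_nonneg (abin_nonneg hs0.le j) (hKjnn j))]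
      congr 1
      rw [ENNReal.ofReal_mul (abin_nonneg hs0.le j)]
      congr 1
      refine ofReal_integral_eq_lintegral_ofReal (hKjint j) ?_
      refine (ae_restrict_iff' measurableSet_Ioi).mpr (Filter.Eventually.of_forall fun x hx => ?_)
      have h1 := hxbd x (mem_Ioi.mp hx).le
      exact mul_nonneg (Kfun_nonneg _ _) (pow_nonneg (by linarith) j)
    rw [tsum_congr hsplitj, ENNReal.tsum_add]
    have hfirst : (∑' j : ℕ, ENNReal.ofReal (abin s j * (if j = 0 then Real.exp (-lam) else 0)))
        = ENNReal.ofReal (Real.exp (-lam)) := by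
      rw [tsum_eq_single 0 (fun j hj => by rw [if_neg hj, mul_zero, ENNReal.ofReal_zero])]
      rw [if_pos rfl, abin_zero, one_mul]
    have hsecond : (∑' j : ℕ, ENNReal.ofReal (abin s j)
          * ∫⁻ x in Ioi (0:ℝ), ENNReal.ofReal (Kfun lam x * (1 - Real.exp (-x))^j))
        = ENNReal.ofReal (Real.exp (-lam) * (Real.exp (lam/(1-s)) - 1)) := by
      have hpull : ∀ j : ℕ, ENNReal.ofReal (abin s j)
            * ∫⁻ x in Ioi (0:ℝ), ENNReal.ofReal (Kfun lam x * (1 - Real.exp (-x))^j)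
          = ∫⁻ x in Ioi (0:ℝ), ENNReal.ofReal (abin s j * (Kfun lam x * (1 - Real.exp (-x))^j)) := by
        intro j
        rw [← lintegral_const_mul _ (hmeasKj j)]
        refine lintegral_congr fun x => ?_
        rw [ENNReal.ofReal_mul (abin_nonneg hs0.le j)]
      rw [tsum_congr hpull, ← lintegral_tsum (fun j => (hmeasKj' j).aemeasurable)]
      have hpt2 : ∀ x ∈ Ioi (0:ℝ), (∑' j : ℕ, ENNReal.ofReal (abin s j * (Kfun lam x * (1 - Real.exp (-x))^j)))
          = ENNReal.ofReal (Kfun lam x * Real.exp (s * x)) := by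
        intro x hx
        have hx0 : (0:ℝ) ≤ x := (mem_Ioi.mp hx).le
        have hhs := binom_hasSum hs0.le hs1 hx0
        have hhs2 : HasSum (fun j => abin s j * (Kfun lam x * (1 - Real.exp (-x))^j))
            (Kfun lam x * Real.exp (s * x)) := by
          rw [show (fun j => abin s j * (Kfun lam x * (1 - Real.exp (-x))^j))
            = fun j => Kfun lam x * (abin s j * (1 - Real.exp (-x))^j)
            from funext fun j => by ring]
          exact hhs.mul_left _
        rw [← hhs2.tsum_eq]
        refine (ENNReal.ofReal_tsum_of_nonneg (fun j => ?_) hhs2.summable).symm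
        have h1 := hxbd x hx0
        exact mul_nonneg (abin_nonneg hs0.le j)
          (mul_nonneg (Kfun_nonneg _ _) (pow_nonneg (by linarith) j))
      rw [setLIntegral_congr_fun measurableSet_Ioi hpt2]
      exact lint_K_exp hlam hs1
    rw [hfirst, hsecond]
    have hsecnn : (0:ℝ) ≤ Real.exp (-lam) * (Real.exp (lam/(1-s)) - 1) := by
      have h1 : (1:ℝ) ≤ Real.exp (lam / (1-s)) := Real.one_le_exp (div_nonneg hlam h1s.le)
      have h2 := (Real.exp_pos (-lam)).le
      nlinarith
    rw [← ENNReal.ofReal_add (Real.exp_pos _).le hsecnn]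
    congr 1
    have hcomb : Real.exp (-lam) + Real.exp (-lam) * (Real.exp (lam/(1-s)) - 1)
        = Real.exp (-lam) * Real.exp (lam/(1-s)) := by ring
    rw [hcomb, ← Real.exp_add]
    congr 1
    field_simp
    ring
  have hfin : (∫ ω, Real.exp (s * B ω) ∂P)
      = (∫⁻ ω, ENNReal.ofReal (Real.exp (s * B ω)) ∂P).toReal := by
    rw [integral_eq_lintegral_of_nonneg_ae
      (Filter.Eventually.of_forall fun ω => (Real.exp_pos _).le)
      ((hBmeas.const_mul s).exp).aestronglyMeasurable]
  rw [hfin, hTeq, ENNReal.toReal_ofReal (Real.exp_pos _).le]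

end RIPf
end MainAnalytic

/-- **Lemma 2.4.** For `d ≥ 3`, `u > 0`, finite `A ⊆ ℤ^d` and `s < 1`,
`E[exp(s⟨L^u, e_A⟩)] = exp(u·s·cap(A)/(1-s))`. -/
theorem laplace_transform_local_time (d : ℕ) (hd : 3 ≤ d) (u : ℝ) (hu : 0 < u)
    (M : RIModel d u) (A : Finset (Lat d)) (s : ℝ) (hs : s < 1) :
    MeasureTheory.integral M.P
        (fun ω => Real.exp (s * ∑' x, M.L ω x * eqm d (A : Set (Lat d)) x)) =
      Real.exp (u * s * dcap d (A : Set (Lat d)) / (1 - s)) := by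
  classical
  by_cases hT : Summable (fun n => pstep d n 0 0)
  · letI := M.mΩ
    haveI := M.prob
    have hd0 : 0 < d := by omega
    have htsum : ∀ ω, (∑' x, M.L ω x * eqm d (↑A : Set (Lat d)) x)
        = ∑ x ∈ A, eqm d (↑A : Set (Lat d)) x * M.L ω x := by
      intro ω
      rw [tsum_eq_sum (s := A) (fun x hx => by
        rw [RIPf.eqm_eq_zero (fun h => hx (Finset.mem_coe.mp h)), mul_zero])]
      exact Finset.sum_congr rfl fun x _ => mul_comm _ _
    have hinteq : (fun ω => Real.exp (s * ∑' x, M.L ω x * eqm d (↑A : Set (Lat d)) x))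
        = fun ω => Real.exp (s * ∑ x ∈ A, eqm d (↑A : Set (Lat d)) x * M.L ω x) :=
      funext fun ω => by rw [htsum ω]
    rw [hinteq]
    have hdcap : dcap d (↑A : Set (Lat d)) = ∑ x ∈ A, eqm d (↑A : Set (Lat d)) x := by
      unfold dcap
      exact tsum_eq_sum (fun x hx => RIPf.eqm_eq_zero (fun h => hx (Finset.mem_coe.mp h)))
    have hcann : (0:ℝ) ≤ ∑ x ∈ A, eqm d (↑A : Set (Lat d)) x :=
      Finset.sum_nonneg fun x _ => RIPf.eqm_nonneg hd0 _ x
    rcases le_or_gt s 0 with hs0 | hs0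
    · -- the case s ≤ 0 : direct application of the Laplace functional
      have ht : (0:ℝ) ≤ -s := by linarith
      have h := RIPf.laplace_neg hd0 hT M A ht
      have hfun : (fun ω => Real.exp (-(-s * ∑ x ∈ A, eqm d (↑A : Set (Lat d)) x * M.L ω x)))
          = fun ω => Real.exp (s * ∑ x ∈ A, eqm d (↑A : Set (Lat d)) x * M.L ω x) :=
        funext fun ω => by
          congr 1
          ring
      rw [hfun] at h
      rw [h, hdcap]
      congr 1
      have h1s : (0:ℝ) < 1 - s := by linarith
      have h2 : (1:ℝ) + -s = 1 - s := by ring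
      rw [h2]
      field_simp
    · -- the case 0 < s < 1 : the analytic continuation
      have hBmeas : Measurable (fun ω => ∑ x ∈ A, eqm d (↑A : Set (Lat d)) x * M.L ω x) := by
        refine Finset.measurable_sum A (fun x _ => ?_)
        exact ((measurable_pi_apply x).comp M.L_meas).const_mul _
      have hBnn : ∀ ω, 0 ≤ ∑ x ∈ A, eqm d (↑A : Set (Lat d)) x * M.L ω x := fun ω =>
        Finset.sum_nonneg fun x _ => mul_nonneg (RIPf.eqm_nonneg hd0 _ x) (M.L_nonneg ω x)
      have hpsi : ∀ i : ℕ,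
          (∫ ω, Real.exp (-((i:ℝ) * ∑ x ∈ A, eqm d (↑A : Set (Lat d)) x * M.L ω x)) ∂M.P)
          = Real.exp (-(u * ∑ x ∈ A, eqm d (↑A : Set (Lat d)) x))
            * Real.exp ((u * ∑ x ∈ A, eqm d (↑A : Set (Lat d)) x) / (1 + (i:ℝ))) := by
        intro i
        have h1i : (0:ℝ) < 1 + (i:ℝ) := by positivity
        have h := RIPf.laplace_neg hd0 hT M A (Nat.cast_nonneg i)
        rw [h, ← Real.exp_add]
        congr 1
        field_simp
        ring
      have hmain := RIPf.main_analytic M.P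
        (fun ω => ∑ x ∈ A, eqm d (↑A : Set (Lat d)) x * M.L ω x) hBmeas hBnn
        (mul_nonneg hu.le hcann) hpsi hs0 hs
      rw [hmain, hdcap]
      congr 1
      ring
  · exact absurd hT (fun hT' => (RIPf.not_summable_absurd (by omega) hu M hT').elim)
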